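/- arXiv:2407.19817 — 4 statements merged into one kernel-verified Lean document; each statement's English description precedes it below -/
import Mathlib

section
/- For any real γ and r ∈ [0,1), the integral F_γ(r) = ∫_𝕌 |1 + u r|^γ du over the unit circle with normalized Haar measure equals 1 + Σ_{k≥1} binom(γ/2, k)² r^{2k}, where binom(γ/2, k) is the generalized binomial coefficient. -/
open MeasureTheory Real

/-- Generalized binomial coefficient `(x choose k)`. -/
noncomputable def genBinom (x : ℝ) (k : ℕ) : ℝ :=
  (∏ j ∈ Finset.range k, (x - j)) / (Nat.factorial k)

lemma genBinom_zero (x : ℝ) : genBinom x 0 = 1 := by simp [genBinom]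

lemma genBinom_succ (x : ℝ) (k : ℕ) :
    genBinom x (k + 1) = genBinom x k * (x - k) / (k + 1) := by
  have h1 : (Nat.factorial k : ℝ) ≠ 0 := Nat.cast_ne_zero.2 k.factorial_ne_zero
  have h2 : ((k : ℝ) + 1) ≠ 0 := by positivity
  unfold genBinom
  rw [Finset.prod_range_succ, Nat.factorial_succ]
  push_cast
  rw [div_mul_eq_mul_div, div_div, mul_comm ((k:ℝ)+1)]

/-- Master summability lemma. -/
lemma summable_genBinom_aux (s : ℝ) {x : ℝ} (hx0 : 0 ≤ x) (hx1 : x < 1) :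
    Summable (fun k : ℕ => |genBinom s k| * (k + 1) * x ^ k) := by
  rcases eq_or_lt_of_le hx0 with h0 | h0
  · apply summable_of_ne_finset_zero (s := {0})
    intro k hk
    have hk' : k ≠ 0 := by simpa using hk
    simp [← h0, zero_pow hk']
  · apply summable_of_ratio_norm_eventually_le (r := (1 + x) / 2) (by linarith)
    have t0 : Filter.Tendsto (fun k : ℕ => 1 / ((k : ℝ) + 1)) Filter.atTop (nhds 0) :=
      tendsto_one_div_add_atTop_nhds_zero_nat
    have hq : Filter.Tendsto
        (fun k : ℕ => (1 - (s + 1) * (1 / ((k : ℝ) + 1))) * (1 + 1 / ((k : ℝ) + 1)) * x)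
        Filter.atTop (nhds ((1 - (s + 1) * 0) * (1 + 0) * x)) := by
      exact (((tendsto_const_nhds.sub (t0.const_mul (s + 1))).mul
        (tendsto_const_nhds.add t0)).mul_const x)
    have hlim : (1 - (s + 1) * 0) * (1 + 0) * x = x := by ring
    rw [hlim] at hq
    have hev : ∀ᶠ k : ℕ in Filter.atTop,
        (1 - (s + 1) * (1 / ((k : ℝ) + 1))) * (1 + 1 / ((k : ℝ) + 1)) * x < (1 + x) / 2 :=
      hq.eventually_lt_const (by linarith)
    have hev2 : ∀ᶠ k : ℕ in Filter.atTop, s ≤ (k : ℝ) :=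
      (tendsto_natCast_atTop_atTop (R := ℝ)).eventually_ge_atTop s
    filter_upwards [hev, hev2] with k hk hks
    have hkp : (0 : ℝ) < (k : ℝ) + 1 := by positivity
    have habs : |genBinom s (k + 1)| = |genBinom s k| * ((k : ℝ) - s) / ((k : ℝ) + 1) := by
      rw [genBinom_succ s k, abs_div, abs_mul]
      rw [abs_of_pos hkp, abs_sub_comm (s) ((k:ℝ)), abs_of_nonneg (by linarith : (0:ℝ) ≤ (k:ℝ) - s)]
    have hfk : (0 : ℝ) ≤ |genBinom s k| * ((k : ℝ) + 1) * x ^ k := by positivity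
    rw [Real.norm_of_nonneg (by positivity), Real.norm_of_nonneg hfk]
    have key : |genBinom s (k + 1)| * ((k : ℝ) + 1 + 1) * x ^ (k + 1)
        = (|genBinom s k| * ((k : ℝ) + 1) * x ^ k) *
          ((1 - (s + 1) * (1 / ((k : ℝ) + 1))) * (1 + 1 / ((k : ℝ) + 1)) * x) := by
      rw [habs]
      field_simp
      ring
    push_cast
    rw [key]
    calc (|genBinom s k| * ((k : ℝ) + 1) * x ^ k) *
          ((1 - (s + 1) * (1 / ((k : ℝ) + 1))) * (1 + 1 / ((k : ℝ) + 1)) * x)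
        ≤ (|genBinom s k| * ((k : ℝ) + 1) * x ^ k) * ((1 + x) / 2) :=
          mul_le_mul_of_nonneg_left hk.le hfk
      _ = (1 + x) / 2 * (|genBinom s k| * ((k : ℝ) + 1) * x ^ k) := by ring

lemma summable_term (s : ℝ) {z : ℂ} (hz : ‖z‖ < 1) :
    Summable (fun k : ℕ => (genBinom s k : ℂ) * z ^ k) := by
  apply Summable.of_norm_bounded (summable_genBinom_aux s (norm_nonneg z) hz)
  intro k
  rw [norm_mul, norm_pow, Complex.norm_real, Real.norm_eq_abs]
  have h1 : (0:ℝ) ≤ |genBinom s k| * ‖z‖ ^ k := by positivity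
  nlinarith [pow_nonneg (norm_nonneg z) k, abs_nonneg (genBinom s k)]

lemma summable_deriv_term (s : ℝ) {ρ : ℝ} (hρ : 0 < ρ) {z : ℂ} (hz : ‖z‖ ≤ ρ) (hρ1 : ρ < 1) :
    Summable (fun k : ℕ => (genBinom s k : ℂ) * ((k : ℂ) * z ^ (k - 1))) := by
  apply Summable.of_norm_bounded ((summable_genBinom_aux s hρ.le hρ1).div_const ρ)
  intro k
  rw [norm_mul, norm_mul, norm_pow, Complex.norm_real, Real.norm_eq_abs, Complex.norm_natCast]
  match k with
  | 0 => simp; positivity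
  | (j+1) =>
    simp only [Nat.add_sub_cancel]
    have h1 : ‖z‖ ^ j ≤ ρ ^ j := pow_le_pow_left₀ (norm_nonneg z) hz j
    have h2 : |genBinom s (j+1)| * ((j:ℝ)+1+1) * ρ ^ (j+1) / ρ
        = |genBinom s (j+1)| * (((j:ℝ)+1+1) * ρ ^ j) := by
      rw [pow_succ]; field_simp
    push_cast
    rw [h2]
    have h3 : ((j:ℝ)+1) * ‖z‖^j ≤ ((j:ℝ)+1+1) * ρ^j := by nlinarith [pow_nonneg hρ.le j]
    exact mul_le_mul_of_nonneg_left h3 (abs_nonneg _)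

noncomputable def bser (s : ℝ) (z : ℂ) : ℂ := ∑' k : ℕ, (genBinom s k : ℂ) * z ^ k

lemma bser_hasDerivAt (s : ℝ) {z : ℂ} (hz : ‖z‖ < 1) :
    HasDerivAt (bser s) (∑' k : ℕ, (genBinom s k : ℂ) * ((k : ℂ) * z ^ (k - 1))) z := by
  set ρ : ℝ := (‖z‖ + 1) / 2 with hρdef
  have hρ0 : 0 < ρ := by positivity
  have hρ1 : ρ < 1 := by rw [hρdef]; linarith
  have hzρ : ‖z‖ < ρ := by rw [hρdef]; linarith [norm_nonneg z]
  apply hasDerivAt_tsum_of_isPreconnected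
    (u := fun k : ℕ => |genBinom s k| * (k + 1) * ρ ^ k / ρ)
    (g := fun (k : ℕ) (w : ℂ) => (genBinom s k : ℂ) * w ^ k)
    (g' := fun (k : ℕ) (w : ℂ) => (genBinom s k : ℂ) * ((k : ℂ) * w ^ (k - 1)))
    ((summable_genBinom_aux s hρ0.le hρ1).div_const ρ)
    (Metric.isOpen_ball (x := (0:ℂ)) (ε := ρ))
    ((convex_ball (0:ℂ) ρ).isPreconnected)
    (y₀ := 0) (hy₀ := by simpa [Metric.mem_ball] using hρ0)
    (hy := by simpa [Metric.mem_ball] using hzρ)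
  · intro k w _
    exact ((hasDerivAt_pow k w).const_mul ((genBinom s k : ℂ)))
  · intro k w hw
    rw [Metric.mem_ball, dist_zero_right] at hw
    have := summable_deriv_term  -- just to keep namespace
    -- norm bound
    rw [norm_mul, norm_mul, norm_pow, Complex.norm_real, Real.norm_eq_abs, Complex.norm_natCast]
    match k with
    | 0 => simp; positivity
    | (j+1) =>
      simp only [Nat.add_sub_cancel]
      have h1 : ‖w‖ ^ j ≤ ρ ^ j := pow_le_pow_left₀ (norm_nonneg w) hw.le j
      have h2 : |genBinom s (j+1)| * ((j:ℝ)+1+1) * ρ ^ (j+1) / ρ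
          = |genBinom s (j+1)| * (((j:ℝ)+1+1) * ρ ^ j) := by
        rw [pow_succ]; field_simp
      push_cast
      rw [h2]
      have h3 : ((j:ℝ)+1) * ‖w‖^j ≤ ((j:ℝ)+1+1) * ρ^j := by nlinarith [pow_nonneg hρ0.le j]
      exact mul_le_mul_of_nonneg_left h3 (abs_nonneg _)
  · exact summable_term s (by simpa using one_pos)

lemma genBinom_rec_complex (s : ℝ) (k : ℕ) :
    (genBinom s (k+1) : ℂ) * ((k : ℂ) + 1) = (genBinom s k : ℂ) * ((s : ℂ) - k) := by
  have h : genBinom s (k+1) * ((k:ℝ) + 1) = genBinom s k * (s - k) := by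
    rw [genBinom_succ]
    field_simp
  have := congrArg (fun x : ℝ => (x : ℂ)) h
  push_cast at this ⊢
  convert this using 2 <;> push_cast <;> ring

lemma bser_ode (s : ℝ) {z : ℂ} (hz : ‖z‖ < 1) :
    (1 + z) * (∑' k : ℕ, (genBinom s k : ℂ) * ((k : ℂ) * z ^ (k - 1)))
      = (s : ℂ) * bser s z := by
  set ρ : ℝ := (‖z‖ + 1) / 2 with hρdef
  have hρ0 : 0 < ρ := by positivity
  have hρ1 : ρ < 1 := by rw [hρdef]; linarith
  have hzρ : ‖z‖ ≤ ρ := by rw [hρdef]; linarith [norm_nonneg z]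
  have hD : Summable (fun k : ℕ => (genBinom s k : ℂ) * ((k : ℂ) * z ^ (k - 1))) :=
    summable_deriv_term s hρ0 hzρ hρ1
  set D : ℂ := ∑' k : ℕ, (genBinom s k : ℂ) * ((k : ℂ) * z ^ (k - 1)) with hDdef
  -- shifted series
  have hshift : Summable (fun k : ℕ => (genBinom s (k+1) : ℂ) * (((k:ℂ) + 1) * z ^ k)) := by
    have := (summable_nat_add_iff 1).2 hD
    apply this.congr
    intro k
    simp only [Nat.add_sub_cancel]
    push_cast
    ring
  have hB : Summable (fun k : ℕ => (genBinom s k : ℂ) * ((k : ℂ) * z ^ k)) := by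
    have := hD.mul_left z
    apply this.congr
    intro k
    match k with
    | 0 => simp
    | (j+1) => simp only [Nat.add_sub_cancel]; push_cast; ring
  have hDshift : D = ∑' k : ℕ, (genBinom s (k+1) : ℂ) * (((k:ℂ) + 1) * z ^ k) := by
    rw [hDdef, hD.tsum_eq_zero_add]
    simp only [Nat.cast_zero, zero_mul, mul_zero, zero_add, Nat.add_sub_cancel]
    push_cast
    apply tsum_congr
    intro k
    ring
  have hzD : z * D = ∑' k : ℕ, (genBinom s k : ℂ) * ((k : ℂ) * z ^ k) := by
    rw [hDdef, ← tsum_mul_left]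
    apply tsum_congr
    intro k
    match k with
    | 0 => simp
    | (j+1) => simp only [Nat.add_sub_cancel]; push_cast; ring
  have hsum : (s : ℂ) * bser s z
      = ∑' k : ℕ, ((genBinom s (k+1) : ℂ) * (((k:ℂ) + 1) * z ^ k)
          + (genBinom s k : ℂ) * ((k : ℂ) * z ^ k)) := by
    rw [bser, ← tsum_mul_left]
    apply tsum_congr
    intro k
    have h := genBinom_rec_complex s k
    have : (genBinom s (k+1) : ℂ) * (((k:ℂ) + 1) * z ^ k)
        = (genBinom s k : ℂ) * (((s:ℂ) - k) * z ^ k) := by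
      rw [← mul_assoc, h, mul_assoc]
    rw [this]
    ring
  rw [hsum, hshift.tsum_add hB, ← hDshift, ← hzD]
  ring

lemma one_add_ne_zero_of_norm_lt {z : ℂ} (hz : ‖z‖ < 1) : 1 + z ≠ 0 := by
  intro h
  have : z = -1 := by linear_combination h
  rw [this] at hz
  simp at hz

lemma one_add_mem_slitPlane {z : ℂ} (hz : ‖z‖ < 1) : 1 + z ∈ Complex.slitPlane := by
  rw [Complex.mem_slitPlane_iff]
  left
  have := Complex.abs_re_le_norm z
  simp only [Complex.add_re, Complex.one_re]
  have : |z.re| < 1 := lt_of_le_of_lt (Complex.abs_re_le_norm z) hz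
  rw [abs_lt] at this
  linarith

theorem hasSum_genBinom_cpow (s : ℝ) {z : ℂ} (hz : ‖z‖ < 1) :
    HasSum (fun k : ℕ => (genBinom s k : ℂ) * z ^ k) ((1 + z) ^ (s : ℂ)) := by
  have hsum := summable_term s hz
  suffices h : bser s z = (1 + z) ^ (s : ℂ) by
    have := hsum.hasSum
    rwa [show (∑' k : ℕ, (genBinom s k : ℂ) * z ^ k) = bser s z from rfl, h] at this
  -- the auxiliary function
  set F : ℂ → ℂ := fun w => bser s w * (1 + w) ^ (-(s : ℂ)) with hFdef
  have hFderiv : ∀ w ∈ Metric.ball (0:ℂ) 1, HasDerivAt F 0 w := by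
    intro w hw
    rw [Metric.mem_ball, dist_zero_right] at hw
    have hne : (1 : ℂ) + w ≠ 0 := one_add_ne_zero_of_norm_lt hw
    have hslit : (1 : ℂ) + w ∈ Complex.slitPlane := one_add_mem_slitPlane hw
    have h1 := bser_hasDerivAt s hw
    have h2 : HasDerivAt (fun w : ℂ => (1 + w) ^ (-(s:ℂ)))
        (-(s:ℂ) * (1 + w) ^ (-(s:ℂ) - 1) * 1) w := by
      exact HasDerivAt.cpow_const ((hasDerivAt_id w).const_add 1) hslit
    have h3 := h1.mul h2
    apply h3.congr_deriv
    set D : ℂ := ∑' k : ℕ, (genBinom s k : ℂ) * ((k : ℂ) * w ^ (k - 1)) with hDdef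
    have hode : (1 + w) * D = (s : ℂ) * bser s w := bser_ode s hw
    have hsplit : (1 + w) ^ (-(s:ℂ)) = (1 + w) * (1 + w) ^ (-(s:ℂ) - 1) := by
      have := Complex.cpow_add (-(s:ℂ) - 1) 1 hne
      rw [show -(s:ℂ) - 1 + 1 = -(s:ℂ) by ring] at this
      rw [this, Complex.cpow_one]
      ring
    rw [hsplit]
    have : D * ((1 + w) * (1 + w) ^ (-(s:ℂ) - 1)) = ((1+w) * D) * (1 + w) ^ (-(s:ℂ) - 1) := by ring
    rw [this, hode]
    ring
  have hFdiff : DifferentiableOn ℂ F (Metric.ball (0:ℂ) 1) :=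
    fun w hw => ((hFderiv w hw).differentiableAt).differentiableWithinAt
  have hFconst : F z = F 0 := by
    apply (convex_ball (0:ℂ) 1).is_const_of_fderivWithin_eq_zero hFdiff
    · intro w hw
      rw [fderivWithin_of_isOpen Metric.isOpen_ball hw]
      have := (hFderiv w hw).hasFDerivAt.fderiv
      rw [this]
      ext v
      simp
    · rw [Metric.mem_ball, dist_zero_right]; exact hz
    · rw [Metric.mem_ball, dist_zero_right]; simp
  have hF0 : F 0 = 1 := by
    rw [hFdef]
    simp only [add_zero, Complex.one_cpow, mul_one]
    rw [bser]
    rw [tsum_eq_single 0 (by intro k hk; simp [zero_pow hk])]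
    simp [genBinom_zero]
  have hne : (1 : ℂ) + z ≠ 0 := one_add_ne_zero_of_norm_lt hz
  have hpow_ne : (1 + z) ^ (s : ℂ) ≠ 0 := by
    intro h
    rcases Complex.cpow_eq_zero_iff _ _ |>.1 h with ⟨h1, _⟩
    exact hne h1
  have : bser s z * (1 + z) ^ (-(s:ℂ)) = 1 := hFconst.trans hF0
  rw [Complex.cpow_neg] at this
  field_simp at this
  exact this

lemma orth_integral (k l : ℕ) :
    ∫ θ in Set.Ioc (0:ℝ) (2*π), Complex.exp (θ * Complex.I) ^ k *
        (starRingEnd ℂ) (Complex.exp (θ * Complex.I) ^ l)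
      = if k = l then ((2*π : ℝ) : ℂ) else 0 := by
  have hpt : ∀ θ : ℝ, Complex.exp (θ * Complex.I) ^ k *
        (starRingEnd ℂ) (Complex.exp (θ * Complex.I) ^ l)
      = Complex.exp ((((k:ℂ) - l) * Complex.I) * θ) := by
    intro θ
    rw [map_pow, ← Complex.exp_conj, ← Complex.exp_nat_mul, ← Complex.exp_nat_mul,
      ← Complex.exp_add]
    congr 1
    simp only [map_mul, Complex.conj_natCast, Complex.conj_ofReal, Complex.conj_I]
    ring
  simp only [hpt]
  rcases eq_or_ne k l with h | h
  · subst h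
    simp only [sub_self, zero_mul, Complex.exp_zero, if_pos rfl]
    rw [setIntegral_const, measureReal_def, Real.volume_Ioc, sub_zero, ENNReal.toReal_ofReal (by positivity)]
    simp [Complex.real_smul]
  · rw [if_neg h]
    have hc : ((k:ℂ) - l) * Complex.I ≠ 0 := by
      apply mul_ne_zero _ Complex.I_ne_zero
      intro hkl
      apply h
      have : (k:ℂ) = l := by linear_combination hkl
      exact_mod_cast this
    rw [← intervalIntegral.integral_of_le (by positivity : (0:ℝ) ≤ 2*π)]
    rw [integral_exp_mul_complex hc]
    have h1 : ((k:ℂ) - l) * Complex.I * ((2*π : ℝ) : ℂ) = (((k:ℤ) - l : ℤ) : ℂ) * (2 * (π:ℂ) * Complex.I) := by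
      push_cast
      ring
    rw [h1, Complex.exp_int_mul_two_pi_mul_I]
    simp

/-- For any real `γ` and `r ∈ [0,1)`, the integral
`F_γ(r) = ∫_𝕌 |1 + u r|^γ du` over the unit circle with normalized Haar
measure equals `1 + Σ_{k≥1} binom(γ/2, k)² r^{2k}`. -/
theorem stmt0 (γ r : ℝ) (hr : r ∈ Set.Ico (0:ℝ) 1) :
    (1 / (2 * π)) * ∫ θ in (0:ℝ)..(2 * π),
        ‖1 + Complex.exp (θ * Complex.I) * r‖ ^ γ
      = 1 + ∑' k : ℕ, genBinom (γ / 2) (k + 1) ^ 2 * r ^ (2 * (k + 1)) := by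
  obtain ⟨hr0, hr1⟩ := hr
  set s : ℝ := γ / 2 with hs
  set a : ℕ → ℝ := fun k => genBinom s k * r ^ k with ha
  set e : ℝ → ℂ := fun θ => Complex.exp (θ * Complex.I) with he
  set g : ℝ → ℂ := fun θ => (1 + e θ * r) ^ (s : ℂ) with hg
  have henorm : ∀ θ : ℝ, ‖e θ‖ = 1 := fun θ => Complex.norm_exp_ofReal_mul_I θ
  have hlt : ∀ θ : ℝ, ‖e θ * (r:ℂ)‖ < 1 := by
    intro θ
    rw [norm_mul, henorm, one_mul, Complex.norm_real, Real.norm_eq_abs, abs_of_nonneg hr0]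
    exact hr1
  have h1 : ∀ θ : ℝ, HasSum (fun k : ℕ => ((a k : ℝ) : ℂ) * (e θ) ^ k) (g θ) := by
    intro θ
    have := hasSum_genBinom_cpow s (hlt θ)
    apply this.congr_fun
    intro k
    rw [mul_pow, ha]
    push_cast
    ring
  have Sa : Summable (fun k : ℕ => |a k|) := by
    apply Summable.of_nonneg_of_le (fun k => abs_nonneg _) _
      (summable_genBinom_aux s hr0 hr1)
    intro k
    rw [ha, abs_mul, abs_pow, abs_of_nonneg hr0]
    have h0 : (0:ℝ) ≤ |genBinom s k| * r ^ k := by positivity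
    nlinarith [pow_nonneg hr0 k, abs_nonneg (genBinom s k)]
  have Sa2 : Summable (fun k : ℕ => (a k) ^ 2) := by
    apply Summable.of_norm_bounded_eventually_nat Sa
    have h0 : ∀ᶠ k : ℕ in Filter.atTop, |a k| < 1 := by
      have := Sa.tendsto_atTop_zero
      exact this.eventually_lt_const one_pos
    filter_upwards [h0] with k hk
    rw [Real.norm_eq_abs, abs_pow]
    nlinarith [abs_nonneg (a k)]
  set A : ℝ := ∑' k : ℕ, |a k| with hA
  have hterm_norm : ∀ (k : ℕ) (θ : ℝ), ‖((a k : ℝ) : ℂ) * (e θ) ^ k‖ = |a k| := by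
    intro k θ
    rw [norm_mul, norm_pow, henorm, one_pow, mul_one, Complex.norm_real, Real.norm_eq_abs]
  have hg_norm : ∀ θ : ℝ, ‖g θ‖ ≤ A := by
    intro θ
    rw [← (h1 θ).tsum_eq]
    have hsn : Summable (fun k : ℕ => ‖((a k : ℝ) : ℂ) * (e θ) ^ k‖) := by
      apply Summable.congr Sa
      intro k
      exact (hterm_norm k θ).symm
    calc ‖∑' k : ℕ, ((a k : ℝ) : ℂ) * (e θ) ^ k‖ ≤ ∑' k : ℕ, ‖((a k : ℝ) : ℂ) * (e θ) ^ k‖ :=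
          norm_tsum_le_tsum_norm hsn
      _ = A := by rw [hA]; exact tsum_congr (fun k => hterm_norm k θ)
  have hw_cont : Continuous (fun θ : ℝ => 1 + e θ * (r:ℂ)) := by
    apply continuous_const.add
    exact (Complex.continuous_exp.comp (Complex.continuous_ofReal.mul continuous_const)).mul
      continuous_const
  have hg_cont : Continuous g := by
    rw [continuous_iff_continuousAt]
    intro θ
    exact ContinuousAt.comp (g := (· ^ (s:ℂ))) (f := fun θ : ℝ => 1 + e θ * (r:ℂ)) (x := θ)
      (continuousAt_cpow_const (one_add_mem_slitPlane (hlt θ))) hw_cont.continuousAt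
  have he_cont : Continuous e :=
    Complex.continuous_exp.comp (Complex.continuous_ofReal.mul continuous_const)
  have hconjg_cont : Continuous (fun θ => (starRingEnd ℂ) (g θ)) := by
    exact (RCLike.continuous_conj (K := ℂ)).comp hg_cont
  -- pointwise identity for the integrand
  have L1 : ∀ θ : ℝ, ‖1 + Complex.exp (θ * Complex.I) * r‖ ^ γ
      = Complex.normSq (g θ) := by
    intro θ
    have habs : ‖g θ‖ = ‖1 + e θ * r‖ ^ s :=
      Complex.norm_cpow_real _ _
    rw [← Complex.sq_norm, habs, ← Real.rpow_natCast _ 2, ← Real.rpow_mul (norm_nonneg _)]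
    norm_num
    rw [hs]
    ring_nf
    simp only [he, mul_comm]
  -- measure facts
  have hIoc : (volume (Set.Ioc (0:ℝ) (2*π))).toReal = 2*π := by
    rw [Real.volume_Ioc, sub_zero, ENNReal.toReal_ofReal (by positivity)]
  have hInt : ∀ h : ℝ → ℂ, Continuous h → IntegrableOn h (Set.Ioc (0:ℝ) (2*π)) :=
    fun h hc => hc.integrableOn_Ioc
  -- inner integral: K k = ∫ e^k conj g = 2π a k
  have hK : ∀ k : ℕ, ∫ θ in Set.Ioc (0:ℝ) (2*π), (e θ) ^ k * (starRingEnd ℂ) (g θ)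
      = ((a k : ℝ) : ℂ) * ((2*π : ℝ) : ℂ) := by
    intro k
    set G : ℕ → ℝ → ℂ := fun l θ => (e θ) ^ k * (((a l : ℝ) : ℂ) * (starRingEnd ℂ) ((e θ) ^ l))
      with hG
    have hconj : ∀ θ : ℝ, HasSum (fun l : ℕ => ((a l : ℝ) : ℂ) * (starRingEnd ℂ) ((e θ) ^ l))
        ((starRingEnd ℂ) (g θ)) := by
      intro θ
      have := (h1 θ).star
      apply this.congr_fun
      intro l
      simp only [star_mul', Complex.star_def, map_pow]
      rw [Complex.conj_ofReal]
    have hGsum : ∀ θ : ℝ, HasSum (fun l : ℕ => G l θ) ((e θ) ^ k * (starRingEnd ℂ) (g θ)) :=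
      fun θ => (hconj θ).mul_left _
    have hGint : ∀ l : ℕ, IntegrableOn (G l) (Set.Ioc (0:ℝ) (2*π)) := by
      intro l
      apply hInt
      exact (he_cont.pow k).mul (continuous_const.mul
        ((RCLike.continuous_conj (K := ℂ)).comp (he_cont.pow l)))
    have hGnorm : ∀ (l : ℕ) (θ : ℝ), ‖G l θ‖ = |a l| := by
      intro l θ
      rw [hG]
      simp only [norm_mul, norm_pow, henorm, one_pow, one_mul, mul_one, RCLike.norm_conj,
        Complex.norm_real, Real.norm_eq_abs]
    have hGsummable : Summable (fun l : ℕ => ∫ θ in Set.Ioc (0:ℝ) (2*π), ‖G l θ‖) := by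
      apply Summable.congr (Sa.mul_left (2*π))
      intro l
      rw [show (fun θ => ‖G l θ‖) = (fun _ : ℝ => |a l|) from funext (hGnorm l)]
      rw [setIntegral_const, measureReal_def, hIoc, smul_eq_mul]
    have hswap := integral_tsum_of_summable_integral_norm hGint hGsummable
    have hGint_eq : ∀ l : ℕ, ∫ θ in Set.Ioc (0:ℝ) (2*π), G l θ
        = ((a l : ℝ) : ℂ) * (if k = l then ((2*π : ℝ) : ℂ) else 0) := by
      intro l
      have : ∀ θ : ℝ, G l θ = ((a l : ℝ) : ℂ) * ((e θ) ^ k * (starRingEnd ℂ) ((e θ) ^ l)) := by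
        intro θ; rw [hG]; ring
      simp only [this]
      rw [integral_const_mul, orth_integral k l]
    calc ∫ θ in Set.Ioc (0:ℝ) (2*π), (e θ) ^ k * (starRingEnd ℂ) (g θ)
        = ∫ θ in Set.Ioc (0:ℝ) (2*π), ∑' l : ℕ, G l θ := by
          apply setIntegral_congr_fun measurableSet_Ioc
          intro θ _
          exact ((hGsum θ).tsum_eq).symm
      _ = ∑' l : ℕ, ∫ θ in Set.Ioc (0:ℝ) (2*π), G l θ := hswap.symm
      _ = ((a k : ℝ) : ℂ) * ((2*π : ℝ) : ℂ) := by
          rw [tsum_eq_single k]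
          · rw [hGint_eq k, if_pos rfl]
          · intro l hl
            rw [hGint_eq l, if_neg (Ne.symm hl), mul_zero]
  -- outer swap: J = 2π ∑ a k ^ 2
  set F : ℕ → ℝ → ℂ := fun k θ => ((a k : ℝ) : ℂ) * (e θ) ^ k * (starRingEnd ℂ) (g θ) with hF
  have hFsum : ∀ θ : ℝ, HasSum (fun k : ℕ => F k θ) (g θ * (starRingEnd ℂ) (g θ)) :=
    fun θ => (h1 θ).mul_right _
  have hFint : ∀ k : ℕ, IntegrableOn (F k) (Set.Ioc (0:ℝ) (2*π)) := by
    intro k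
    apply hInt
    exact (continuous_const.mul (he_cont.pow k)).mul hconjg_cont
  have hFnorm : ∀ (k : ℕ) (θ : ℝ), ‖F k θ‖ ≤ |a k| * A := by
    intro k θ
    rw [hF]
    simp only [norm_mul, RCLike.norm_conj, Complex.norm_real, Real.norm_eq_abs, norm_pow,
      henorm, one_pow, mul_one]
    exact mul_le_mul_of_nonneg_left (hg_norm θ) (abs_nonneg _)
  have hFsummable : Summable (fun k : ℕ => ∫ θ in Set.Ioc (0:ℝ) (2*π), ‖F k θ‖) := by
    apply Summable.of_nonneg_of_le
      (fun k => integral_nonneg (fun θ => norm_nonneg _)) _ ((Sa.mul_right A).mul_left (2*π))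
    intro k
    calc ∫ θ in Set.Ioc (0:ℝ) (2*π), ‖F k θ‖
        ≤ ∫ _ in Set.Ioc (0:ℝ) (2*π), |a k| * A := by
          apply setIntegral_mono_on ((hFint k).norm) (integrableOn_const ?_)
            measurableSet_Ioc (fun θ _ => hFnorm k θ)
          rw [Real.volume_Ioc]
          exact ENNReal.ofReal_ne_top
      _ = 2*π * (|a k| * A) := by rw [setIntegral_const, measureReal_def, hIoc, smul_eq_mul]
  have hswap2 := integral_tsum_of_summable_integral_norm hFint hFsummable
  have hFint_eq : ∀ k : ℕ, ∫ θ in Set.Ioc (0:ℝ) (2*π), F k θ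
      = ((2*π * (a k)^2 : ℝ) : ℂ) := by
    intro k
    have : ∀ θ : ℝ, F k θ = ((a k : ℝ) : ℂ) * ((e θ) ^ k * (starRingEnd ℂ) (g θ)) := by
      intro θ; rw [hF]; ring
    simp only [this]
    rw [integral_const_mul, hK k]
    push_cast
    ring
  have hJ : ∫ θ in Set.Ioc (0:ℝ) (2*π), g θ * (starRingEnd ℂ) (g θ)
      = ((2*π * ∑' k : ℕ, (a k)^2 : ℝ) : ℂ) := by
    calc ∫ θ in Set.Ioc (0:ℝ) (2*π), g θ * (starRingEnd ℂ) (g θ)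
        = ∫ θ in Set.Ioc (0:ℝ) (2*π), ∑' k : ℕ, F k θ := by
          apply setIntegral_congr_fun measurableSet_Ioc
          intro θ _
          exact ((hFsum θ).tsum_eq).symm
      _ = ∑' k : ℕ, ∫ θ in Set.Ioc (0:ℝ) (2*π), F k θ := hswap2.symm
      _ = ∑' k : ℕ, ((2*π * (a k)^2 : ℝ) : ℂ) := tsum_congr hFint_eq
      _ = ((2*π * ∑' k : ℕ, (a k)^2 : ℝ) : ℂ) := by
          rw [← Complex.ofReal_tsum]
          congr 1
          rw [← tsum_mul_left]
  -- relate to the real integral of normSq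
  have hJ2 : ∫ θ in Set.Ioc (0:ℝ) (2*π), g θ * (starRingEnd ℂ) (g θ)
      = ((∫ θ in Set.Ioc (0:ℝ) (2*π), Complex.normSq (g θ) : ℝ) : ℂ) := by
    calc ∫ θ in Set.Ioc (0:ℝ) (2*π), g θ * (starRingEnd ℂ) (g θ)
        = ∫ θ in Set.Ioc (0:ℝ) (2*π), ((Complex.normSq (g θ) : ℝ) : ℂ) := by
          apply setIntegral_congr_fun measurableSet_Ioc
          intro θ _
          simp only
          rw [Complex.mul_conj]
      _ = ((∫ θ in Set.Ioc (0:ℝ) (2*π), Complex.normSq (g θ) : ℝ) : ℂ) := integral_ofReal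
  have hreal : ∫ θ in Set.Ioc (0:ℝ) (2*π), Complex.normSq (g θ) = 2*π * ∑' k : ℕ, (a k)^2 := by
    have := hJ2.symm.trans hJ
    exact_mod_cast this
  -- finish
  have hIcc : ∫ θ in (0:ℝ)..(2*π), ‖1 + Complex.exp (θ * Complex.I) * r‖ ^ γ
      = 2*π * ∑' k : ℕ, (a k)^2 := by
    rw [intervalIntegral.integral_of_le (by positivity : (0:ℝ) ≤ 2*π)]
    rw [← hreal]
    apply setIntegral_congr_fun measurableSet_Ioc
    intro θ _
    exact L1 θ
  rw [hIcc]
  have hpi : (2*π) ≠ 0 := by positivity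
  rw [← mul_assoc, one_div, inv_mul_cancel₀ hpi, one_mul]
  have hsplit := Sa2.tsum_eq_zero_add
  rw [hsplit]
  congr 1
  · rw [ha]; simp [genBinom_zero]
  · apply tsum_congr
    intro k
    rw [ha]
    simp only
    rw [mul_pow, ← pow_mul, Nat.mul_comm (k+1) 2]
end

section
/- For any real γ with κ := γ/(2i), the function G_γ(r) = ∫_𝕌 exp(γ Im log(1+ru)) du satisfies G_γ(r) = Σ_{k≥0} binom(κ,k) binom(−κ,k) r^{2k} = 1 + Σ_{k≥1} c_{k-1}(γ) r^{2k}/k², where c_0(γ) = γ²/4 and c_k(γ) = (γ²/4) ∏_{j=1}^{k} (1 + γ²/(4j²)) for k ≥ 1; in particular all coefficients are nonnegative. -/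
open MeasureTheory Real

open Filter Topology

/-- Generalized binomial coefficient `(x choose k)` with complex `x`. -/
noncomputable def genBinomC (x : ℂ) (k : ℕ) : ℂ :=
  (∏ j ∈ Finset.range k, (x - j)) / (Nat.factorial k)

/-- `c_k(γ) = (γ²/4) ∏_{j=1}^{k} (1 + γ²/(4j²))` (so `c_0(γ) = γ²/4`). -/
noncomputable def cCoef (γ : ℝ) (k : ℕ) : ℝ :=
  (γ ^ 2 / 4) * ∏ j ∈ Finset.Icc 1 k, (1 + γ ^ 2 / (4 * (j : ℝ) ^ 2))

/-- `G_γ(r) = ∫_𝕌 exp(γ Im log(1+ru)) du` with normalized Haar measure on the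
unit circle and the principal branch of the logarithm. -/
noncomputable def Gint (γ r : ℝ) : ℝ :=
  (1 / (2 * π)) * ∫ θ in (0:ℝ)..(2 * π),
    Real.exp (γ * (Complex.log (1 + r * Complex.exp (θ * Complex.I))).im)

lemma genBinomC_zero (x : ℂ) : genBinomC x 0 = 1 := by simp [genBinomC]

lemma genBinomC_succ (x : ℂ) (k : ℕ) :
    genBinomC x (k + 1) = genBinomC x k * (x - k) / (k + 1) := by
  have h1 : ((k : ℂ) + 1) ≠ 0 := by
    exact_mod_cast Nat.cast_add_one_ne_zero (R := ℂ) k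
  have h2 : ((Nat.factorial k : ℕ) : ℂ) ≠ 0 := Nat.cast_ne_zero.2 k.factorial_ne_zero
  simp only [genBinomC, Finset.prod_range_succ, Nat.factorial_succ]
  push_cast
  rw [div_mul_eq_mul_div, div_div]
  rw [mul_comm ((k:ℂ) + 1)]

lemma norm_genBinomC_succ (x : ℂ) (k : ℕ) :
    ‖genBinomC x (k + 1)‖ = ‖genBinomC x k‖ * ‖x - k‖ / ((k : ℝ) + 1) := by
  rw [genBinomC_succ, norm_div, norm_mul]
  congr 1
  have : ((k : ℂ) + 1) = (((k : ℝ) + 1 : ℝ) : ℂ) := by push_cast; ring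
  rw [this, Complex.norm_real, Real.norm_of_nonneg (by positivity)]

lemma summable_aux (x : ℂ) {s : ℝ} (hs0 : 0 ≤ s) (hs1 : s < 1) :
    Summable (fun k : ℕ => ((k : ℝ) + 1) * ‖genBinomC x k‖ * s ^ k) := by
  set a : ℕ → ℝ := fun k => ((k : ℝ) + 1) * ‖genBinomC x k‖ * s ^ k with ha
  have hnn : ∀ k, 0 ≤ a k := fun k => by positivity
  set q : ℕ → ℝ := fun n => s * (((n : ℝ) + 2) / ((n : ℝ) + 1)) * (‖x - n‖ / ((n : ℝ) + 1))
    with hq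
  have hkey : ∀ n, a (n + 1) = q n * a n := by
    intro n
    have h1 : ((n : ℝ) + 1) ≠ 0 := by positivity
    simp only [ha, hq, norm_genBinomC_succ, pow_succ]
    push_cast
    field_simp
    ring
  have h1 : Tendsto (fun n : ℕ => ((n : ℝ) + 2) / ((n : ℝ) + 1)) atTop (𝓝 1) := by
    have := (tendsto_one_div_add_atTop_nhds_zero_nat : Tendsto (fun n : ℕ => 1 / ((n : ℝ) + 1)) atTop (𝓝 0))
    have h := this.const_add 1
    simp only [add_zero] at h
    refine h.congr fun n => ?_
    have h1 : ((n : ℝ) + 1) ≠ 0 := by positivity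
    field_simp
    ring
  have h2 : Tendsto (fun n : ℕ => ‖x - n‖ / ((n : ℝ) + 1)) atTop (𝓝 1) := by
    have hc : Tendsto (fun n : ℕ => ((1 / ((n : ℝ) + 1) : ℝ) : ℂ)) atTop (𝓝 0) := by
      have := (tendsto_one_div_add_atTop_nhds_zero_nat : Tendsto (fun n : ℕ => 1 / ((n : ℝ) + 1)) atTop (𝓝 0))
      simpa [Function.comp_def] using (Complex.continuous_ofReal.tendsto 0).comp this
    have h3 : Tendsto (fun n : ℕ => (x + 1) * ((1 / ((n : ℝ) + 1) : ℝ) : ℂ) - 1) atTop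
        (𝓝 (-1)) := by
      have := (hc.const_mul (x + 1)).sub_const 1
      simpa using this
    have h4 := h3.norm
    simp only [norm_neg, norm_one] at h4
    refine h4.congr fun n => ?_
    have h1 : ((n : ℝ) + 1) ≠ 0 := by positivity
    have hne : ((n : ℂ) + 1) ≠ 0 := by exact_mod_cast Nat.cast_add_one_ne_zero (R := ℂ) n
    have : (x + 1) * ((1 / ((n : ℝ) + 1) : ℝ) : ℂ) - 1 = (x - n) * (((1 / ((n:ℝ)+1)) : ℝ) : ℂ) := by
      push_cast
      field_simp
      ring
    rw [this, norm_mul, Complex.norm_real, Real.norm_of_nonneg (by positivity)]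
    field_simp
  have hqt : Tendsto q atTop (𝓝 s) := by
    have := ((h1.const_mul s).mul h2)
    simpa using this
  set ρ : ℝ := (s + 1) / 2 with hρ
  have hρ1 : ρ < 1 := by rw [hρ]; linarith
  have hsρ : s < ρ := by rw [hρ]; linarith
  apply summable_of_ratio_norm_eventually_le hρ1
  filter_upwards [hqt.eventually_le_const hsρ] with n hn
  rw [Real.norm_of_nonneg (hnn _), Real.norm_of_nonneg (hnn _), hkey]
  exact mul_le_mul_of_nonneg_right hn (hnn n)

lemma summable_norm_genBinomC (x : ℂ) {s : ℝ} (hs0 : 0 ≤ s) (hs1 : s < 1) :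
    Summable (fun k : ℕ => ‖genBinomC x k‖ * s ^ k) := by
  refine (summable_aux x hs0 hs1).of_nonneg_of_le (fun k => by positivity) fun k => ?_
  nlinarith [mul_nonneg (mul_nonneg (Nat.cast_nonneg (α := ℝ) k)
    (norm_nonneg (genBinomC x k))) (pow_nonneg hs0 k)]

lemma summable_genBinomC_mul_pow (x : ℂ) {w : ℂ} (hw : ‖w‖ < 1) :
    Summable (fun k : ℕ => genBinomC x k * w ^ k) := by
  apply Summable.of_norm
  refine (summable_norm_genBinomC x (norm_nonneg w) hw).congr fun k => ?_
  rw [norm_mul, norm_pow]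

lemma summable_u (x : ℂ) {s : ℝ} (hs0 : 0 < s) (hs1 : s < 1) :
    Summable (fun k : ℕ => ‖genBinomC x k‖ * ((k : ℝ) * s ^ (k - 1))) := by
  refine ((summable_aux x hs0.le hs1).mul_left (1 / s)).of_nonneg_of_le
    (fun k => by positivity) fun k => ?_
  cases k with
  | zero => simp; positivity
  | succ k =>
    have : (k + 1 : ℕ) - 1 = k := rfl
    rw [this]
    have h1 : ((k + 1 : ℕ) : ℝ) * s ^ k ≤ (1 / s) * (((k + 1 : ℕ) : ℝ) + 1) * s ^ (k + 1) := by
      rw [pow_succ]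
      have : (1 / s) * (((k + 1 : ℕ) : ℝ) + 1) * (s ^ k * s) = (((k + 1 : ℕ) : ℝ) + 1) * s ^ k := by
        field_simp
      rw [this]
      have hk : ((k + 1 : ℕ) : ℝ) ≤ ((k + 1 : ℕ) : ℝ) + 1 := by linarith
      exact mul_le_mul_of_nonneg_right hk (by positivity)
    calc ‖genBinomC x (k+1)‖ * (((k + 1 : ℕ) : ℝ) * s ^ k)
        ≤ ‖genBinomC x (k+1)‖ * ((1 / s) * (((k + 1 : ℕ) : ℝ) + 1) * s ^ (k + 1)) :=
          mul_le_mul_of_nonneg_left h1 (norm_nonneg _)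
      _ = 1 / s * ((((k + 1 : ℕ) : ℝ) + 1) * ‖genBinomC x (k+1)‖ * s ^ (k + 1)) := by ring

lemma summable_deriv_terms (x : ℂ) {z : ℂ} (hz : ‖z‖ < 1) :
    Summable (fun k : ℕ => genBinomC x k * ((k : ℂ) * z ^ (k - 1))) := by
  set s : ℝ := (‖z‖ + 1) / 2 with hs
  have hs0 : 0 < s := by have := norm_nonneg z; rw [hs]; linarith
  have hs1 : s < 1 := by rw [hs]; linarith
  have hzs : ‖z‖ ≤ s := by rw [hs]; linarith
  apply Summable.of_norm
  refine (summable_u x hs0 hs1).of_nonneg_of_le (fun k => norm_nonneg _) fun k => ?_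
  rw [norm_mul, norm_mul, norm_pow, Complex.norm_natCast]
  exact mul_le_mul_of_nonneg_left (mul_le_mul_of_nonneg_left
    (pow_le_pow_left₀ (norm_nonneg z) hzs _) (Nat.cast_nonneg k)) (norm_nonneg _)

lemma hasSum_genBinomC (x : ℂ) {w : ℂ} (hw : ‖w‖ < 1) :
    HasSum (fun k : ℕ => genBinomC x k * w ^ k) ((1 + w) ^ x) := by
  set b : ℕ → ℂ := genBinomC x with hb
  set F : ℂ → ℂ := fun z => ∑' k, b k * z ^ k with hF
  set D : ℂ → ℂ := fun z => ∑' k, b k * ((k : ℂ) * z ^ (k - 1)) with hD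
  have hone : ∀ z : ℂ, ‖z‖ < 1 → 1 + z ≠ 0 := by
    intro z hz h
    have : z = -1 := by linear_combination h
    rw [this] at hz; simp at hz
  have hslit : ∀ z : ℂ, ‖z‖ < 1 → (1 + z) ∈ Complex.slitPlane := by
    intro z hz
    left
    have h1 : |z.re| ≤ ‖z‖ := Complex.abs_re_le_norm z
    have : (1 + z).re = 1 + z.re := by simp
    rw [this]
    have := abs_le.1 h1
    linarith [this.1]
  -- derivative of F on the unit ball
  have main : ∀ z : ℂ, ‖z‖ < 1 → HasDerivAt F (D z) z := by
    intro z hz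
    set s : ℝ := (‖z‖ + 1) / 2 with hs
    have hs0 : 0 < s := by have := norm_nonneg z; rw [hs]; linarith
    have hs1 : s < 1 := by rw [hs]; linarith
    have hzs : ‖z‖ < s := by rw [hs]; linarith
    exact hasDerivAt_tsum_of_isPreconnected
      (u := fun k => ‖b k‖ * ((k : ℝ) * s ^ (k - 1)))
      (g := fun k y => b k * y ^ k) (g' := fun k y => b k * ((k : ℂ) * y ^ (k - 1)))
      (summable_u x hs0 hs1) Metric.isOpen_ball
      (convex_ball (0:ℂ) s).isPreconnected
      (fun n y _ => (hasDerivAt_pow n y).const_mul (b n))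
      (fun n y hy => by
        rw [norm_mul, norm_mul, norm_pow, Complex.norm_natCast]
        refine mul_le_mul_of_nonneg_left (mul_le_mul_of_nonneg_left
          (pow_le_pow_left₀ (norm_nonneg y) ?_ _) (Nat.cast_nonneg n)) (norm_nonneg _)
        exact le_of_lt (mem_ball_zero_iff.1 hy))
      (Metric.mem_ball_self hs0)
      (summable_genBinomC_mul_pow x (by simp))
      (mem_ball_zero_iff.2 hzs)
  -- functional equation
  have keyD : ∀ z : ℂ, ‖z‖ < 1 → x * F z = (1 + z) * D z := by
    intro z hz
    have hFsum : HasSum (fun k => b k * z ^ k) (F z) :=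
      (summable_genBinomC_mul_pow x hz).hasSum
    have hDsum : HasSum (fun k => b k * ((k : ℂ) * z ^ (k - 1))) (D z) :=
      (summable_deriv_terms x hz).hasSum
    have hshift := (hasSum_nat_add_iff' (f := fun k => b k * ((k : ℂ) * z ^ (k - 1))) 1).mpr hDsum
    simp only [Finset.range_one, Finset.sum_singleton, Nat.cast_zero, zero_mul, mul_zero,
      sub_zero] at hshift
    have e1 : (fun n => b (n + 1) * (((n + 1 : ℕ) : ℂ) * z ^ (n + 1 - 1)))
        = fun k => (x - k) * (b k * z ^ k) := by
      funext k
      have h1 : ((k : ℂ) + 1) ≠ 0 := Nat.cast_add_one_ne_zero (R := ℂ) k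
      have : b (k + 1) = b k * (x - k) / (k + 1) := genBinomC_succ x k
      rw [Nat.add_sub_cancel, this]
      push_cast
      field_simp
    rw [e1] at hshift
    have hsum2 := hshift.add (hDsum.mul_left z)
    have e2 : (fun k => (x - k) * (b k * z ^ k) + z * (b k * ((k : ℂ) * z ^ (k - 1))))
        = fun k => x * (b k * z ^ k) := by
      funext k
      cases k with
      | zero => simp
      | succ k =>
        rw [Nat.add_sub_cancel]
        push_cast
        rw [pow_succ]
        ring
    rw [e2] at hsum2
    have := (hFsum.mul_left x).unique hsum2
    rw [this]; ring
  -- H is constant on the ball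
  have hball : ∀ z : ℂ, ‖z‖ < 1 → F z * (1 + z) ^ (-x) = 1 := by
    have hHderiv : ∀ z ∈ Metric.ball (0 : ℂ) 1,
        HasDerivAt (fun y => F y * (1 + y) ^ (-x)) 0 z := by
      intro z hz
      rw [Metric.mem_ball, dist_zero_right] at hz
      have hF' := main z hz
      have h1z := hone z hz
      have hP : HasDerivAt (fun y : ℂ => (1 + y) ^ (-x))
          (-x * (1 + z) ^ (-x - 1) * 1) z :=
        HasDerivAt.cpow_const ((hasDerivAt_id z).const_add 1) (hslit z hz)
      have hH := hF'.mul hP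
      refine hH.congr_deriv (Eq.symm ?_)
      have hpow : (1 + z) * (1 + z) ^ (-x - 1) = (1 + z) ^ (-x) := by
        have h := Complex.cpow_add (x := 1 + z) 1 (-x - 1) h1z
        rw [Complex.cpow_one, show (1 : ℂ) + (-x - 1) = -x by ring] at h
        exact h.symm
      have hk := keyD z hz
      calc (0 : ℂ) = D z * (1 + z) ^ (-x) - ((1 + z) * D z) * (1 + z) ^ (-x - 1) := by
            have he : ((1 + z) * D z) * (1 + z) ^ (-x - 1)
                = D z * ((1 + z) * (1 + z) ^ (-x - 1)) := by ring
            rw [he, hpow]; ring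
        _ = D z * (1 + z) ^ (-x) + F z * (-x * (1 + z) ^ (-x - 1) * 1) := by
            rw [← hk]; ring
    have hF0 : F 0 = 1 := by
      have : HasSum (fun k => b k * (0 : ℂ) ^ k) (b 0 * (0 : ℂ) ^ 0) :=
        hasSum_single 0 (fun k hk => by simp [zero_pow hk])
      have h := this.tsum_eq
      simpa [hb, genBinomC_zero] using h
    intro z hz
    have hconst : ∀ y ∈ Metric.ball (0 : ℂ) 1,
        (fun y => F y * (1 + y) ^ (-x)) y = (fun y => F y * (1 + y) ^ (-x)) 0 := by
      intro y hy
      refine (convex_ball (0:ℂ) 1).is_const_of_fderivWithin_eq_zero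
        (fun w hw => ((hHderiv w hw).differentiableAt).differentiableWithinAt) ?_ hy
        (by simpa [Metric.mem_ball] using (show (0:ℝ) < 1 by norm_num))
      intro w hw
      rw [fderivWithin_of_isOpen Metric.isOpen_ball hw,
        ((hHderiv w hw).hasFDerivAt).fderiv]
      ext1
      simp
    have h := hconst z (by simpa [Metric.mem_ball] using hz)
    simpa [hF0, Complex.one_cpow] using h
  -- conclude
  have h1w := hone w hw
  have hcne : (1 + w) ^ x ≠ 0 := by
    rw [Complex.cpow_def_of_ne_zero h1w]
    exact Complex.exp_ne_zero _
  have hFw : F w = (1 + w) ^ x := by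
    have h := hball w hw
    rw [Complex.cpow_neg] at h
    field_simp at h
    exact h
  rw [← hFw]
  exact (summable_genBinomC_mul_pow x hw).hasSum

lemma orth (j k : ℕ) :
    ∫ θ in (0:ℝ)..(2*π), Complex.exp ((((k:ℂ) - j) * Complex.I) * θ)
      = if k = j then ((2*π : ℝ) : ℂ) else 0 := by
  by_cases h : k = j
  · subst h
    simp only [sub_self, zero_mul, Complex.exp_zero]
    rw [intervalIntegral.integral_const, sub_zero, Complex.real_smul, mul_one, if_pos trivial]
  · rw [if_neg h]
    have hc : ((k:ℂ) - j) * Complex.I ≠ 0 :=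
      mul_ne_zero (sub_ne_zero.2 (by exact_mod_cast h)) Complex.I_ne_zero
    rw [integral_exp_mul_complex hc]
    have h2 : ((k:ℂ) - j) * Complex.I * ((2*π:ℝ):ℂ)
        = ((k - j : ℤ) : ℂ) * (2 * (π:ℂ) * Complex.I) := by push_cast; ring
    rw [h2, Complex.exp_int_mul_two_pi_mul_I]
    simp

noncomputable def zfun (r θ : ℝ) : ℂ := (r:ℂ) * Complex.exp ((θ:ℂ) * Complex.I)

lemma zfun_norm {r : ℝ} (hr0 : 0 ≤ r) (θ : ℝ) : ‖zfun r θ‖ = r := by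
  rw [zfun, norm_mul, Complex.norm_real, Real.norm_of_nonneg hr0,
    Complex.norm_exp_ofReal_mul_I, mul_one]

lemma zfun_cont (r : ℝ) : Continuous (zfun r) :=
  continuous_const.mul (Complex.continuous_exp.comp (Complex.continuous_ofReal.mul continuous_const))

lemma one_add_zfun_re {r : ℝ} (hr0 : 0 ≤ r) (hr1 : r < 1) (θ : ℝ) : 0 < (1 + zfun r θ).re := by
  have h1 : |(zfun r θ).re| ≤ ‖zfun r θ‖ := Complex.abs_re_le_norm _
  rw [zfun_norm hr0] at h1
  have h2 : (1 + zfun r θ).re = 1 + (zfun r θ).re := by simp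
  rw [h2]
  have := (abs_le.1 h1).1
  linarith

lemma one_add_zfun_ne {r : ℝ} (hr0 : 0 ≤ r) (hr1 : r < 1) (θ : ℝ) : 1 + zfun r θ ≠ 0 := by
  intro h
  have := one_add_zfun_re hr0 hr1 θ
  rw [h] at this
  simp at this

lemma conj_zfun (r θ : ℝ) :
    (starRingEnd ℂ) (zfun r θ) = (r:ℂ) * Complex.exp (-((θ:ℂ) * Complex.I)) := by
  rw [zfun, map_mul, Complex.conj_ofReal, ← Complex.exp_conj]
  congr 2
  simp [Complex.conj_ofReal]

lemma norm_exp_real_mul_I_mul (c θ : ℝ) : ‖Complex.exp (((c:ℂ) * Complex.I) * θ)‖ = 1 := by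
  rw [show ((c:ℂ) * Complex.I) * θ = ((c*θ:ℝ):ℂ) * Complex.I by
    push_cast; ring, Complex.norm_exp_ofReal_mul_I]

lemma prod_pow_zfun (r θ : ℝ) (j k : ℕ) :
    ((starRingEnd ℂ) (zfun r θ))^j * (zfun r θ)^k
      = (r:ℂ)^(j+k) * Complex.exp ((((k:ℂ) - j) * Complex.I) * (θ:ℝ)) := by
  rw [conj_zfun, zfun, mul_pow, mul_pow, ← Complex.exp_nat_mul, ← Complex.exp_nat_mul,
    pow_add]
  rw [show (r:ℂ)^j * Complex.exp (j * -((θ:ℂ) * Complex.I)) *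
      ((r:ℂ)^k * Complex.exp (k * ((θ:ℂ) * Complex.I)))
    = (r:ℂ)^j * (r:ℂ)^k * (Complex.exp (j * -((θ:ℂ) * Complex.I)) *
      Complex.exp (k * ((θ:ℂ) * Complex.I))) by ring, ← Complex.exp_add]
  congr 1
  push_cast
  ring

lemma cont_cpow_zfun {r : ℝ} (hr0 : 0 ≤ r) (hr1 : r < 1) (κ : ℂ) :
    Continuous (fun θ : ℝ => (1 + zfun r θ) ^ κ) := by
  apply Continuous.cpow (continuous_const.add (zfun_cont r)) continuous_const
  exact fun θ => Or.inl (one_add_zfun_re hr0 hr1 θ)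

lemma integrableOn_aux {f : ℝ → ℂ} (hf : Continuous f) :
    MeasureTheory.IntegrableOn f (Set.Ioc (0:ℝ) (2*π)) :=
  (hf.continuousOn.integrableOn_compact isCompact_Icc).mono_set Set.Ioc_subset_Icc_self

lemma inner_integral (κ : ℂ) {r : ℝ} (hr0 : 0 ≤ r) (hr1 : r < 1) (j : ℕ) :
    ∫ θ in Set.Ioc (0:ℝ) (2*π), ((starRingEnd ℂ) (zfun r θ))^j * (1 + zfun r θ) ^ κ
      = genBinomC κ j * (r:ℂ)^(2*j) * ((2*π:ℝ):ℂ) := by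
  have hπ := Real.pi_pos
  set G : ℕ → ℝ → ℂ := fun k θ =>
    genBinomC κ k * ((r:ℂ)^(j+k) * Complex.exp ((((k:ℂ) - j) * Complex.I) * (θ:ℝ))) with hG
  have hzn : ∀ θ : ℝ, ‖zfun r θ‖ < 1 := fun θ => by rw [zfun_norm hr0]; exact hr1
  have hptsum : ∀ θ : ℝ, HasSum (fun k => G k θ)
      (((starRingEnd ℂ) (zfun r θ))^j * (1 + zfun r θ) ^ κ) := by
    intro θ
    have h := (hasSum_genBinomC κ (hzn θ)).mul_left (((starRingEnd ℂ) (zfun r θ))^j)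
    refine h.congr_fun fun k => ?_
    rw [hG]
    simp only
    rw [show ((starRingEnd ℂ) (zfun r θ))^j * (genBinomC κ k * (zfun r θ)^k)
      = genBinomC κ k * (((starRingEnd ℂ) (zfun r θ))^j * (zfun r θ)^k) by ring,
      prod_pow_zfun]
  have hGcont : ∀ k, Continuous (G k) := by
    intro k
    apply continuous_const.mul
    apply continuous_const.mul
    exact Complex.continuous_exp.comp (continuous_const.mul Complex.continuous_ofReal)
  have hnormG : ∀ k θ, ‖G k θ‖ = ‖genBinomC κ k‖ * r^(j+k) := by
    intro k θ
    rw [hG]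
    simp only [norm_mul]
    rw [show ((k:ℂ) - j) = (((k:ℝ) - j : ℝ):ℂ) by push_cast; ring,
      norm_exp_real_mul_I_mul, norm_pow, Complex.norm_real, Real.norm_of_nonneg hr0, mul_one]
  have hGint : ∀ k, MeasureTheory.IntegrableOn (G k) (Set.Ioc (0:ℝ) (2*π)) :=
    fun k => integrableOn_aux (hGcont k)
  have hGsum : Summable (fun k => ∫ θ in Set.Ioc (0:ℝ) (2*π), ‖G k θ‖) := by
    have : (fun k => ∫ θ in Set.Ioc (0:ℝ) (2*π), ‖G k θ‖)
        = fun k => (2*π) * (‖genBinomC κ k‖ * r^(j+k)) := by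
      funext k
      simp only [hnormG]
      rw [MeasureTheory.setIntegral_const, Measure.real, Real.volume_Ioc, smul_eq_mul]
      congr 1
      rw [ENNReal.toReal_ofReal (by linarith)]
      ring
    rw [this]
    apply Summable.mul_left
    have h2 : (fun k => ‖genBinomC κ k‖ * r^(j+k))
        = fun k => r^j * (‖genBinomC κ k‖ * r^k) := by
      funext k; rw [pow_add]; ring
    rw [h2]
    exact (summable_norm_genBinomC κ hr0 hr1).mul_left _
  have hinter := MeasureTheory.hasSum_integral_of_summable_integral_norm hGint hGsum
  have htsum : ∀ θ : ℝ, (∑' k, G k θ)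
      = ((starRingEnd ℂ) (zfun r θ))^j * (1 + zfun r θ) ^ κ := fun θ => (hptsum θ).tsum_eq
  have hGval : ∀ k, (∫ θ in Set.Ioc (0:ℝ) (2*π), G k θ)
      = genBinomC κ k * (r:ℂ)^(j+k) * (if k = j then ((2*π:ℝ):ℂ) else 0) := by
    intro k
    rw [hG]
    simp only
    rw [MeasureTheory.integral_const_mul, MeasureTheory.integral_const_mul,
      ← intervalIntegral.integral_of_le (by linarith : (0:ℝ) ≤ 2*π), orth j k]
    ring
  have hsingle : HasSum (fun k => genBinomC κ k * (r:ℂ)^(j+k) * (if k = j then ((2*π:ℝ):ℂ) else 0))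
      (genBinomC κ j * (r:ℂ)^(2*j) * ((2*π:ℝ):ℂ)) := by
    have := hasSum_single (f := fun k =>
        genBinomC κ k * (r:ℂ)^(j+k) * (if k = j then ((2*π:ℝ):ℂ) else 0)) j
      (fun k hk => by simp [if_neg hk])
    simpa [two_mul] using this
  have heqint : (∫ θ in Set.Ioc (0:ℝ) (2*π), ∑' i, G i θ)
      = ∫ θ in Set.Ioc (0:ℝ) (2*π), ((starRingEnd ℂ) (zfun r θ))^j * (1 + zfun r θ) ^ κ :=
    MeasureTheory.setIntegral_congr_fun measurableSet_Ioc (fun θ _ => htsum θ)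
  have hfe : (fun k => ∫ θ in Set.Ioc (0:ℝ) (2*π), G k θ)
      = fun k => genBinomC κ k * (r:ℂ)^(j+k) * (if k = j then ((2*π:ℝ):ℂ) else 0) :=
    funext hGval
  rw [heqint, hfe] at hinter
  exact hinter.unique hsingle

lemma pointwise_id (γ : ℝ) {r : ℝ} (hr0 : 0 ≤ r) (hr1 : r < 1) (θ : ℝ) :
    ((Real.exp (γ * (Complex.log (1 + zfun r θ)).im) : ℝ) : ℂ)
      = (1 + (starRingEnd ℂ) (zfun r θ)) ^ (-((γ:ℂ)/(2*Complex.I)))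
        * (1 + zfun r θ) ^ ((γ:ℂ)/(2*Complex.I)) := by
  set κ : ℂ := (γ:ℂ)/(2*Complex.I) with hκ
  have hne := one_add_zfun_ne hr0 hr1 θ
  have harg : (1 + zfun r θ).arg ≠ π := by
    intro h
    have := (Complex.arg_eq_pi_iff.1 h).1
    linarith [one_add_zfun_re hr0 hr1 θ]
  have hconj1 : (1 : ℂ) + (starRingEnd ℂ) (zfun r θ) = (starRingEnd ℂ) (1 + zfun r θ) := by
    rw [map_add, map_one]
  have hcne2 : (starRingEnd ℂ) (1 + zfun r θ) ≠ 0 :=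
    fun h => hne (by simpa using congrArg (starRingEnd ℂ) h)
  have hmain : ∀ L : ℂ, (starRingEnd ℂ) L * (-κ) + L * κ = ((γ * L.im : ℝ) : ℂ) := by
    intro L
    have hsub : L - (starRingEnd ℂ) L = ((2 * L.im : ℝ) : ℂ) * Complex.I := Complex.sub_conj L
    have hc : (starRingEnd ℂ) L = L - ((2 * L.im : ℝ):ℂ) * Complex.I := by
      linear_combination -hsub
    rw [hc, hκ]
    push_cast
    field_simp
    ring
  rw [hconj1, Complex.cpow_def_of_ne_zero hcne2, Complex.cpow_def_of_ne_zero hne,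
    Complex.log_conj _ harg, ← Complex.exp_add, hmain, ← Complex.ofReal_exp]

lemma hasSum_Gint (γ : ℝ) {r : ℝ} (hr0 : 0 ≤ r) (hr1 : r < 1) :
    HasSum (fun k : ℕ => genBinomC ((γ:ℂ)/(2*Complex.I)) k *
      genBinomC (-((γ:ℂ)/(2*Complex.I))) k * (r:ℂ) ^ (2*k)) ((Gint γ r : ℝ) : ℂ) := by
  have hπ := Real.pi_pos
  set κ : ℂ := (γ:ℂ)/(2*Complex.I) with hκ
  set F : ℕ → ℝ → ℂ := fun j θ =>
    genBinomC (-κ) j * ((starRingEnd ℂ) (zfun r θ))^j * (1 + zfun r θ) ^ κ with hFdef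
  have hzn : ∀ θ : ℝ, ‖zfun r θ‖ < 1 := fun θ => by rw [zfun_norm hr0]; exact hr1
  have hzcn : ∀ θ : ℝ, ‖(starRingEnd ℂ) (zfun r θ)‖ < 1 := fun θ => by
    rw [RCLike.norm_conj]; exact hzn θ
  -- pointwise expansion
  have hpt : ∀ θ : ℝ, HasSum (fun j => F j θ)
      (((Real.exp (γ * (Complex.log (1 + zfun r θ)).im) : ℝ) : ℂ)) := by
    intro θ
    rw [pointwise_id γ hr0 hr1 θ]
    have h := (hasSum_genBinomC (-κ) (hzcn θ)).mul_right ((1 + zfun r θ) ^ κ)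
    exact h
  -- continuity and integrability
  have hKcont : Continuous (fun θ : ℝ => (1 + zfun r θ) ^ κ) := cont_cpow_zfun hr0 hr1 κ
  have hFcont : ∀ j, Continuous (F j) := fun j =>
    (continuous_const.mul ((Complex.continuous_conj.comp (zfun_cont r)).pow j)).mul hKcont
  have hFint : ∀ j, MeasureTheory.IntegrableOn (F j) (Set.Ioc (0:ℝ) (2*π)) :=
    fun j => integrableOn_aux (hFcont j)
  -- uniform bound for the cpow factor
  obtain ⟨C, hC⟩ := (isCompact_Icc (a := (0:ℝ)) (b := 2*π)).exists_bound_of_continuousOn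
    hKcont.continuousOn
  have hC0 : 0 ≤ C := le_trans (norm_nonneg _) (hC 0 ⟨le_refl _, by linarith⟩)
  have hFsum : Summable (fun j => ∫ θ in Set.Ioc (0:ℝ) (2*π), ‖F j θ‖) := by
    have hb : ∀ j, (∫ θ in Set.Ioc (0:ℝ) (2*π), ‖F j θ‖)
        ≤ (2*π) * C * (‖genBinomC (-κ) j‖ * r^j) := by
      intro j
      have hle : ∀ θ ∈ Set.Ioc (0:ℝ) (2*π), ‖F j θ‖ ≤ C * (‖genBinomC (-κ) j‖ * r^j) := by
        intro θ hθ
        have h1 : ‖F j θ‖ = ‖genBinomC (-κ) j‖ * r^j * ‖(1 + zfun r θ) ^ κ‖ := by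
          rw [hFdef]
          simp only [norm_mul, norm_pow]
          rw [RCLike.norm_conj, zfun_norm hr0]
        rw [h1]
        have h2 : ‖(1 + zfun r θ) ^ κ‖ ≤ C :=
          hC θ ⟨le_of_lt hθ.1, hθ.2⟩
        calc ‖genBinomC (-κ) j‖ * r^j * ‖(1 + zfun r θ) ^ κ‖
            ≤ ‖genBinomC (-κ) j‖ * r^j * C :=
              mul_le_mul_of_nonneg_left h2 (by positivity)
          _ = C * (‖genBinomC (-κ) j‖ * r^j) := by ring
      calc (∫ θ in Set.Ioc (0:ℝ) (2*π), ‖F j θ‖)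
          ≤ ∫ _θ in Set.Ioc (0:ℝ) (2*π), C * (‖genBinomC (-κ) j‖ * r^j) := by
            refine MeasureTheory.setIntegral_mono_on ((hFint j).norm) ?_ measurableSet_Ioc hle
            exact MeasureTheory.integrableOn_const (by
              rw [Real.volume_Ioc]; exact ENNReal.ofReal_ne_top)
        _ = (2*π) * C * (‖genBinomC (-κ) j‖ * r^j) := by
            rw [MeasureTheory.setIntegral_const, Measure.real, Real.volume_Ioc, smul_eq_mul,
              ENNReal.toReal_ofReal (by linarith)]
            ring
    refine Summable.of_nonneg_of_le
      (fun j => MeasureTheory.integral_nonneg (fun θ => norm_nonneg _)) hb ?_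
    exact ((summable_norm_genBinomC (-κ) hr0 hr1).mul_left ((2*π) * C)).congr
      (fun j => by ring)
  have hinter := MeasureTheory.hasSum_integral_of_summable_integral_norm hFint hFsum
  -- value of each outer integral
  have hFval : ∀ j, (∫ θ in Set.Ioc (0:ℝ) (2*π), F j θ)
      = genBinomC (-κ) j * (genBinomC κ j * (r:ℂ)^(2*j) * ((2*π:ℝ):ℂ)) := by
    intro j
    have h1 : ∀ θ : ℝ, F j θ
        = genBinomC (-κ) j * (((starRingEnd ℂ) (zfun r θ))^j * (1 + zfun r θ) ^ κ) := by
      intro θ; rw [hFdef]; ring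
    simp only [h1]
    rw [MeasureTheory.integral_const_mul, inner_integral κ hr0 hr1 j]
  -- identify the integral of the sum with Gint
  have htsum : ∀ θ : ℝ, (∑' j, F j θ)
      = ((Real.exp (γ * (Complex.log (1 + zfun r θ)).im) : ℝ) : ℂ) :=
    fun θ => (hpt θ).tsum_eq
  have heqint : (∫ θ in Set.Ioc (0:ℝ) (2*π), ∑' j, F j θ)
      = ∫ θ in Set.Ioc (0:ℝ) (2*π),
          ((Real.exp (γ * (Complex.log (1 + zfun r θ)).im) : ℝ) : ℂ) :=
    MeasureTheory.setIntegral_congr_fun measurableSet_Ioc (fun θ _ => htsum θ)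
  have hfe : (fun j => ∫ θ in Set.Ioc (0:ℝ) (2*π), F j θ)
      = fun j => genBinomC (-κ) j * (genBinomC κ j * (r:ℂ)^(2*j) * ((2*π:ℝ):ℂ)) :=
    funext hFval
  rw [heqint, hfe] at hinter
  -- relate to Gint
  have hGeq : ((Gint γ r : ℝ) : ℂ) = (((2*π:ℝ):ℂ))⁻¹ * ∫ θ in Set.Ioc (0:ℝ) (2*π),
      ((Real.exp (γ * (Complex.log (1 + zfun r θ)).im) : ℝ) : ℂ) := by
    rw [Gint, Complex.ofReal_mul, ← intervalIntegral.integral_ofReal,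
      intervalIntegral.integral_of_le (by linarith : (0:ℝ) ≤ 2*π)]
    congr 1
    rw [one_div, Complex.ofReal_inv]
  have hπne : (((2*π:ℝ):ℂ)) ≠ 0 := by
    simp only [ne_eq, Complex.ofReal_eq_zero]
    positivity
  have hfinal := hinter.mul_left ((((2*π:ℝ):ℂ))⁻¹)
  rw [← hGeq] at hfinal
  have hπne2 : ((π:ℝ):ℂ) ≠ 0 := Complex.ofReal_ne_zero.mpr (ne_of_gt hπ)
  refine hfinal.congr_fun fun j => ?_
  push_cast
  field_simp

lemma genBinom_mul (γ : ℝ) (k : ℕ) :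
    genBinomC ((γ:ℂ)/(2*Complex.I)) k * genBinomC (-((γ:ℂ)/(2*Complex.I))) k
      = (((∏ j ∈ Finset.range k, ((j:ℝ)^2 + γ^2/4)) / ((Nat.factorial k : ℝ))^2 : ℝ) : ℂ) := by
  rw [genBinomC, genBinomC, div_mul_div_comm, ← Finset.prod_mul_distrib]
  have hprod : ∀ j ∈ Finset.range k,
      ((γ:ℂ)/(2*Complex.I) - j) * (-((γ:ℂ)/(2*Complex.I)) - j)
        = (((j:ℝ)^2 + γ^2/4 : ℝ) : ℂ) := by
    intro j _
    have hI : (Complex.I : ℂ)^2 = -1 := Complex.I_sq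
    push_cast
    field_simp
    linear_combination (-4*(γ:ℂ)^2) * hI
  rw [Finset.prod_congr rfl hprod]
  push_cast
  ring

lemma cCoef_prod (γ : ℝ) (k : ℕ) :
    ∏ j ∈ Finset.range (k+1), ((j:ℝ)^2 + γ^2/4)
      = cCoef γ k * ((Nat.factorial k : ℝ))^2 := by
  induction k with
  | zero => simp [cCoef]
  | succ k ih =>
    rw [Finset.prod_range_succ, ih]
    have hstep : cCoef γ (k+1) = cCoef γ k * (1 + γ^2/(4*(((k:ℝ)+1))^2)) := by
      rw [cCoef, cCoef, show k + 1 = (k) + 1 from rfl,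
        Finset.prod_Icc_succ_top (by omega : 1 ≤ k+1)]
      push_cast
      ring
    have h1 : ((k:ℝ) + 1) ≠ 0 := by positivity
    rw [hstep, Nat.factorial_succ]
    push_cast
    field_simp

lemma cCoef_nonneg (γ : ℝ) (k : ℕ) : 0 ≤ cCoef γ k := by
  rw [cCoef]
  apply mul_nonneg (by positivity)
  apply Finset.prod_nonneg
  intro j _
  positivity

/-- For real `γ` with `κ := γ/(2i)`,
`G_γ(r) = Σ_{k≥0} binom(κ,k) binom(−κ,k) r^{2k} = 1 + Σ_{k≥1} c_{k-1}(γ) r^{2k}/k²`,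
and all coefficients `c_k(γ)` are nonnegative. -/
theorem stmt3 (γ r : ℝ) (hr : r ∈ Set.Ico (0:ℝ) 1) :
    ((Gint γ r : ℂ) = ∑' k : ℕ,
        genBinomC ((γ : ℂ) / (2 * Complex.I)) k *
          genBinomC (-((γ : ℂ) / (2 * Complex.I))) k * (r : ℂ) ^ (2 * k)) ∧
    (Gint γ r = 1 + ∑' k : ℕ, cCoef γ k * r ^ (2 * (k + 1)) / ((k : ℝ) + 1) ^ 2) ∧
    (∀ k, 0 ≤ cCoef γ k) := by
  obtain ⟨hr0, hr1⟩ := hr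
  have hS := hasSum_Gint γ hr0 hr1
  refine ⟨hS.tsum_eq.symm, ?_, cCoef_nonneg γ⟩
  set e : ℕ → ℝ := fun k =>
    (∏ j ∈ Finset.range k, ((j:ℝ)^2 + γ^2/4)) / ((Nat.factorial k : ℝ))^2 * r^(2*k) with he
  have hterm : (fun k : ℕ => genBinomC ((γ:ℂ)/(2*Complex.I)) k *
      genBinomC (-((γ:ℂ)/(2*Complex.I))) k * (r:ℂ) ^ (2*k)) = fun k => ((e k : ℝ) : ℂ) := by
    funext k
    rw [genBinom_mul, he]
    push_cast
    ring
  rw [hterm] at hS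
  have hRe : HasSum e (Gint γ r) := Complex.hasSum_ofReal.mp hS
  have hshift := (hasSum_nat_add_iff' (f := e) 1).mpr hRe
  have he0 : ∑ i ∈ Finset.range 1, e i = 1 := by
    simp [he]
  rw [he0] at hshift
  have hval : (fun k => e (k + 1))
      = fun k => cCoef γ k * r ^ (2 * (k + 1)) / ((k : ℝ) + 1) ^ 2 := by
    funext k
    rw [he]
    simp only
    rw [cCoef_prod γ k, Nat.factorial_succ]
    have h1 : ((k:ℝ) + 1) ≠ 0 := by positivity
    have h2 : ((Nat.factorial k : ℕ) : ℝ) ≠ 0 := by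
      exact_mod_cast k.factorial_ne_zero
    push_cast
    field_simp
  rw [hval] at hshift
  have := hshift.tsum_eq
  linarith [hshift.tsum_eq]
end

section
/- Let β, γ > 0, ϰ = √(2/β), and for j ∈ ℕ₀ let |α_j|² be independent Beta variables with P[|α_j|² ≥ r] = (1−r)^{β_j}, β_j = β(j+1)/2. Define the martingale Q_{k,n} = ∏_{j=0}^{n-1} (1−|α_j|²)^{k/ϰ²} / E[(1−|α_j|²)^{k/ϰ²}]. Then E[Q_{k,n}^γ] = ∏_{j=0}^{n-1} ((j+k+1)/(j+1))^γ (j+1)/(j+γk+1) ≤ exp(c γ² k²) for a numerical constant c, uniformly in n. -/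
open MeasureTheory ProbabilityTheory


lemma ae_mem_Ico {Ω : Type} [MeasurableSpace Ω] (μ : Measure Ω) [IsProbabilityMeasure μ]
    (X : Ω → ℝ) (hX : Measurable X) (b : ℝ) (hb : 0 < b)
    (hs : ∀ r ∈ Set.Icc (0:ℝ) 1, μ {ω | r ≤ X ω} = ENNReal.ofReal ((1 - r) ^ b)) :
    ∀ᵐ ω ∂μ, 0 ≤ X ω ∧ X ω < 1 := by
  have h0 : μ {ω | 0 ≤ X ω} = 1 := by
    have := hs 0 ⟨le_refl _, zero_le_one⟩
    simpa using this
  have h1 : μ {ω | 1 ≤ X ω} = 0 := by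
    have := hs 1 ⟨zero_le_one, le_refl _⟩
    simpa [Real.zero_rpow hb.ne'] using this
  have hA : ∀ᵐ ω ∂μ, 0 ≤ X ω := by
    refine (ae_iff.2 ?_)
    have hc : μ {ω | 0 ≤ X ω}ᶜ = 0 := by
      rw [measure_compl (measurableSet_le measurable_const hX) (measure_ne_top μ _), h0]
      simp
    simpa [Set.compl_setOf] using hc
  have hB : ∀ᵐ ω ∂μ, X ω < 1 := by
    refine (ae_iff.2 ?_)
    simpa [not_lt] using h1
  filter_upwards [hA, hB] with ω h h' using ⟨h, h'⟩

lemma moment {Ω : Type} [MeasurableSpace Ω] (μ : Measure Ω) [IsProbabilityMeasure μ]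
    (X : Ω → ℝ) (hX : Measurable X) (b m : ℝ) (hb : 0 < b) (hm : 0 ≤ m)
    (hs : ∀ r ∈ Set.Icc (0:ℝ) 1, μ {ω | r ≤ X ω} = ENNReal.ofReal ((1 - r) ^ b)) :
    ∫ ω, |1 - X ω| ^ m ∂μ = b / (b + m) := by
  have hae := ae_mem_Ico μ X hX b hb hs
  rcases eq_or_lt_of_le hm with hm0 | hm0
  · simp [← hm0, div_self hb.ne']
  set f : Ω → ℝ := fun ω => |1 - X ω| ^ m with hf
  have hfm : Measurable f := (Real.continuous_rpow_const hm).measurable.comp ((measurable_const.sub hX).abs)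
  have hf_nn : 0 ≤ᵐ[μ] f := Filter.Eventually.of_forall fun ω => Real.rpow_nonneg (abs_nonneg _) _
  have hf_le : ∀ᵐ ω ∂μ, f ω ≤ 1 := by
    filter_upwards [hae] with ω hω
    exact Real.rpow_le_one (abs_nonneg _)
      (by rw [abs_of_nonneg (by linarith [hω.2])]; linarith [hω.1]) hm
  have hint : Integrable f μ := by
    refine Integrable.mono' (integrable_const 1) hfm.aestronglyMeasurable ?_
    filter_upwards [hf_le] with ω h
    rw [Real.norm_eq_abs, abs_of_nonneg (Real.rpow_nonneg (abs_nonneg _) _)]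
    exact h
  rw [hint.integral_eq_integral_meas_lt hf_nn]
  have hmeas : ∀ t ∈ Set.Ioi (0:ℝ), (μ {a | t < f a}).toReal
      = Set.indicator (Set.Ioo (0:ℝ) 1) (fun t => 1 - t ^ (b / m)) t := by
    intro t ht
    rcases lt_or_ge t 1 with ht1 | ht1
    · have htpos : (0:ℝ) < t := ht
      have hset : {a | t < f a} =ᵐ[μ] {a | X a < 1 - t ^ m⁻¹} := by
        rw [Filter.eventuallyEq_set]
        filter_upwards [hae] with ω hω
        have h1x : 0 < 1 - X ω := by linarith [hω.2]
        simp only [Set.mem_setOf_eq, hf, abs_of_pos h1x]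
        rw [← Real.rpow_inv_lt_iff_of_pos htpos.le h1x.le hm0]
        constructor <;> intro h <;> linarith
      have hr : 1 - t ^ m⁻¹ ∈ Set.Ico (0:ℝ) 1 := by
        constructor
        · have : t ^ m⁻¹ ≤ 1 := Real.rpow_le_one htpos.le ht1.le (by positivity)
          linarith
        · have : 0 < t ^ m⁻¹ := Real.rpow_pos_of_pos htpos _
          linarith
      have hcompl : {a | X a < 1 - t ^ m⁻¹} = {a | 1 - t ^ m⁻¹ ≤ X a}ᶜ := by
        ext a
        simp only [Set.mem_compl_iff, Set.mem_setOf_eq, not_le]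
      have hble : t ^ (b/m) ≤ 1 := Real.rpow_le_one htpos.le ht1.le (by positivity)
      have hμ : μ {a | X a < 1 - t ^ m⁻¹} = ENNReal.ofReal (1 - t ^ (b/m)) := by
        rw [hcompl, measure_compl (measurableSet_le measurable_const hX) (measure_ne_top μ _),
          hs _ (Set.mem_Icc.mpr ⟨hr.1, hr.2.le⟩)]
        have h2 : (1 : ℝ) - (1 - t ^ m⁻¹) = t ^ m⁻¹ := by ring
        rw [h2, ← Real.rpow_mul htpos.le, inv_mul_eq_div, measure_univ,
          ← ENNReal.ofReal_one, ← ENNReal.ofReal_sub _ (Real.rpow_nonneg htpos.le _)]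
      rw [measure_congr hset, hμ, Set.indicator_of_mem (Set.mem_Ioo.mpr ⟨htpos, ht1⟩),
        ENNReal.toReal_ofReal (by linarith)]
    · have h0 : μ {a | t < f a} = 0 := by
        have : {a | t < f a} =ᵐ[μ] (∅ : Set Ω) := by
          rw [Filter.eventuallyEq_set]
          filter_upwards [hf_le] with a h
          simp only [Set.mem_setOf_eq, Set.mem_empty_iff_false, iff_false, not_lt]
          linarith
        rw [measure_congr this, measure_empty]
      rw [h0, Set.indicator_of_notMem (by simp [not_lt, ht1])]
      simp
  simp only [measureReal_def]
  rw [setIntegral_congr_fun measurableSet_Ioi hmeas,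
    integral_indicator measurableSet_Ioo, Measure.restrict_restrict measurableSet_Ioo,
    Set.inter_eq_left.mpr Set.Ioo_subset_Ioi_self]
  have hioo : ∫ t in Set.Ioo (0:ℝ) 1, (1 - t ^ (b/m))
      = ∫ t in (0:ℝ)..1, (1 - t ^ (b/m)) := by
    rw [intervalIntegral.integral_of_le zero_le_one, integral_Ioc_eq_integral_Ioo]
  have ha : (0:ℝ) < b / m := by positivity
  rw [hioo, intervalIntegral.integral_sub intervalIntegrable_const
      (intervalIntegral.intervalIntegrable_rpow' (by linarith)),
    integral_rpow (Or.inl (by linarith))]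
  simp only [intervalIntegral.integral_const, smul_eq_mul, sub_zero, mul_one,
    Real.one_rpow, Real.zero_rpow (by positivity : b/m + 1 ≠ 0)]
  rw [eq_div_iff (by positivity : b + m ≠ 0)]
  field_simp
  ring


lemma indep_prod_integral {Ω : Type} [MeasurableSpace Ω] (μ : Measure Ω) [IsProbabilityMeasure μ]
    (X : ℕ → Ω → ℝ) (hXm : ∀ j, Measurable (X j))
    (hind : iIndepFun X μ)
    (g : ℕ → ℝ → ℝ) (hg : ∀ j, Measurable (g j)) (hg0 : ∀ j x, 0 ≤ g j x) (n : ℕ) :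
    ∫ ω, ∏ j ∈ Finset.range n, g j (X j ω) ∂μ
      = ∏ j ∈ Finset.range n, ∫ ω, g j (X j ω) ∂μ := by
  induction n with
  | zero => simp
  | succ n ih =>
    have hindf : iIndepFun (fun j ω => g j (X j ω)) μ :=
      hind.comp g hg
    have hmeasf : ∀ j, Measurable fun ω => g j (X j ω) := fun j => (hg j).comp (hXm j)
    have hP : (∏ j ∈ Finset.range n, fun ω => g j (X j ω))
        = fun ω => ∏ j ∈ Finset.range n, g j (X j ω) := by
      ext ω; simp
    have hIF : IndepFun (fun ω => ∏ j ∈ Finset.range n, g j (X j ω))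
        (fun ω => g n (X n ω)) μ := hP ▸ hindf.indepFun_prod_range_succ hmeasf n
    have key := hIF.integral_fun_mul_eq_mul_integral
      ((Finset.measurable_prod _ fun j _ => hmeasf j).aestronglyMeasurable)
      ((hmeasf n).aestronglyMeasurable)
    have key' : ∫ ω, (∏ j ∈ Finset.range n, g j (X j ω)) * g n (X n ω) ∂μ
        = (∫ ω, ∏ j ∈ Finset.range n, g j (X j ω) ∂μ) * ∫ ω, g n (X n ω) ∂μ := key
    rw [Finset.prod_range_succ, ← ih, ← key']
    congr 1
    ext ω
    simp [Finset.prod_range_succ]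

lemma sum_inv_sq_le (n : ℕ) :
    ∑ j ∈ Finset.range n, (1 : ℝ) / ((j : ℝ) + 1) ^ 2 ≤ 2 - 2 / ((n : ℝ) + 1) := by
  induction n with
  | zero => norm_num
  | succ n ih =>
    rw [Finset.sum_range_succ]
    have h1 : (0:ℝ) < (n:ℝ) + 1 := by positivity
    have h2 : (0:ℝ) < (n:ℝ) + 2 := by positivity
    have key : (1 : ℝ) / ((n : ℝ) + 1) ^ 2 ≤ 2 / ((n:ℝ) + 1) - 2 / ((n:ℝ) + 2) := by
      rw [div_sub_div _ _ h1.ne' h2.ne', div_le_div_iff₀ (by positivity) (by positivity)]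
      ring_nf
      nlinarith
    push_cast
    have : ((n:ℝ) + 1) + 1 = (n:ℝ) + 2 := by ring
    rw [this]
    linarith

lemma term_bound (γ : ℝ) (hγ : 0 < γ) (k j : ℕ) :
    (((j : ℝ) + k + 1) / ((j : ℝ) + 1)) ^ γ * (((j : ℝ) + 1) / ((j : ℝ) + γ * k + 1))
      ≤ Real.exp ((γ * k / ((j:ℝ) + 1)) ^ 2) := by
  set l : ℝ := (k : ℝ) / ((j : ℝ) + 1) with hl
  have hj1 : (0:ℝ) < (j:ℝ) + 1 := by positivity
  have hl0 : 0 ≤ l := by positivity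
  have hx0 : 0 ≤ γ * l := by positivity
  have e1 : ((j : ℝ) + k + 1) / ((j : ℝ) + 1) = 1 + l := by
    rw [hl]; field_simp; ring
  have e2 : ((j : ℝ) + 1) / ((j : ℝ) + γ * k + 1) = (1 + γ * l)⁻¹ := by
    rw [hl, ← one_div, eq_div_iff (by positivity)]
    field_simp
    ring
  rw [e1, e2]
  have h1 : (1 + l) ^ γ ≤ Real.exp (γ * l) := by
    rw [Real.rpow_def_of_pos (by linarith)]
    refine Real.exp_le_exp.2 ?_
    have := Real.log_le_sub_one_of_pos (x := 1 + l) (by linarith)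
    calc Real.log (1 + l) * γ ≤ l * γ := by nlinarith
      _ = γ * l := by ring
  have h2 : (1 + γ * l)⁻¹ ≤ Real.exp ((γ*l)^2 - γ * l) := by
    rw [← Real.exp_log (x := (1 + γ*l)⁻¹) (by positivity), Real.exp_le_exp,
      Real.log_inv]
    have hlog : γ * l - (γ*l)^2 ≤ Real.log (1 + γ * l) := by
      have hinv := Real.log_le_sub_one_of_pos (x := (1 + γ*l)⁻¹) (by positivity)
      rw [Real.log_inv] at hinv
      have : (1 + γ*l)⁻¹ - 1 = -(γ*l) / (1 + γ*l) := by
        field_simp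
        ring
      rw [this] at hinv
      have h3 : -(γ*l) / (1 + γ*l) ≤ -(γ * l - (γ*l)^2) := by
        rw [div_le_iff₀ (by positivity : (0:ℝ) < 1 + γ*l)]
        nlinarith
      linarith
    linarith
  calc (1 + l) ^ γ * (1 + γ * l)⁻¹
      ≤ Real.exp (γ * l) * Real.exp ((γ*l)^2 - γ*l) := by
        refine mul_le_mul h1 h2 (by positivity) (Real.exp_nonneg _)
    _ = Real.exp ((γ*l)^2) := by rw [← Real.exp_add]; ring_nf
    _ = Real.exp ((γ * k / ((j:ℝ)+1))^2) := by rw [hl]; ring_nf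

lemma prod_bound (γ : ℝ) (hγ : 0 < γ) (k n : ℕ) :
    ∏ j ∈ Finset.range n,
        (((j : ℝ) + k + 1) / ((j : ℝ) + 1)) ^ γ * (((j : ℝ) + 1) / ((j : ℝ) + γ * k + 1))
      ≤ Real.exp (2 * γ ^ 2 * (k : ℝ) ^ 2) := by
  calc ∏ j ∈ Finset.range n,
        (((j : ℝ) + k + 1) / ((j : ℝ) + 1)) ^ γ * (((j : ℝ) + 1) / ((j : ℝ) + γ * k + 1))
      ≤ ∏ j ∈ Finset.range n, Real.exp ((γ * k / ((j:ℝ) + 1)) ^ 2) := by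
        refine Finset.prod_le_prod (fun j _ => ?_) (fun j _ => term_bound γ hγ k j)
        have hj1 : (0:ℝ) < (j:ℝ) + 1 := by positivity
        have h1 : (0:ℝ) < ((j : ℝ) + k + 1) / ((j : ℝ) + 1) := by positivity
        have h2 : (0:ℝ) < ((j : ℝ) + 1) / ((j : ℝ) + γ * k + 1) := by positivity
        positivity
    _ = Real.exp (∑ j ∈ Finset.range n, (γ * k / ((j:ℝ) + 1)) ^ 2) := by
        rw [Real.exp_sum]
    _ ≤ Real.exp (2 * γ ^ 2 * (k : ℝ) ^ 2) := by
        refine Real.exp_le_exp.2 ?_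
        have : ∑ j ∈ Finset.range n, (γ * k / ((j:ℝ) + 1)) ^ 2
            = γ^2 * (k:ℝ)^2 * ∑ j ∈ Finset.range n, (1:ℝ) / ((j:ℝ) + 1)^2 := by
          rw [Finset.mul_sum]
          refine Finset.sum_congr rfl fun j _ => ?_
          field_simp
        rw [this]
        have hsum := sum_inv_sq_le n
        have h2 : ∑ j ∈ Finset.range n, (1:ℝ) / ((j:ℝ) + 1)^2 ≤ 2 := by
          have : (0:ℝ) ≤ 2 / ((n:ℝ)+1) := by positivity
          linarith
        nlinarith [sq_nonneg (γ * k)]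


/-- Let `β, γ > 0`, `ϰ = √(2/β)` (so that `k/ϰ² = kβ/2`), and let
`X j = |α_j|²` be independent Beta variables with `P[X j ≥ r] = (1−r)^{β_j}`,
`β_j = β(j+1)/2`. With `Q_{k,n} = ∏_{j<n} (1−X_j)^{k/ϰ²} / E[(1−X_j)^{k/ϰ²}]`,
one has `E[Q_{k,n}^γ] = ∏_{j<n} ((j+k+1)/(j+1))^γ (j+1)/(j+γk+1)`, and this is
bounded by `exp(c γ² k²)` for a numerical constant `c`, uniformly in `n`. -/
theorem stmt15 :
    ∃ c : ℝ, 0 < c ∧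
      ∀ {Ω : Type} [MeasurableSpace Ω] (μ : Measure Ω) [IsProbabilityMeasure μ]
        (β γ : ℝ), 0 < β → 0 < γ →
        ∀ (X : ℕ → Ω → ℝ), (∀ j, Measurable (X j)) →
        iIndepFun X μ →
        (∀ j : ℕ, ∀ r ∈ Set.Icc (0:ℝ) 1,
          μ {ω | r ≤ X j ω} = ENNReal.ofReal ((1 - r) ^ (β * (j + 1) / 2))) →
        ∀ k n : ℕ,
          (∫ ω, (∏ j ∈ Finset.range n,
              (1 - X j ω) ^ ((k : ℝ) * β / 2)
                / (∫ ω', (1 - X j ω') ^ ((k : ℝ) * β / 2) ∂μ)) ^ γ ∂μ)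
            = (∏ j ∈ Finset.range n,
                (((j : ℝ) + k + 1) / ((j : ℝ) + 1)) ^ γ
                  * (((j : ℝ) + 1) / ((j : ℝ) + γ * k + 1))) ∧
          (∫ ω, (∏ j ∈ Finset.range n,
              (1 - X j ω) ^ ((k : ℝ) * β / 2)
                / (∫ ω', (1 - X j ω') ^ ((k : ℝ) * β / 2) ∂μ)) ^ γ ∂μ)
            ≤ Real.exp (c * γ ^ 2 * (k : ℝ) ^ 2) := by
  refine ⟨2, by norm_num, ?_⟩
  intro Ω _ μ _ β γ hβ hγ X hXm hind hsurv k n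
  set m : ℝ := (k : ℝ) * β / 2 with hmdef
  have hm : 0 ≤ m := by positivity
  have hmγ : 0 ≤ m * γ := by positivity
  -- pointwise a.e. facts
  have haej : ∀ j : ℕ, ∀ᵐ ω ∂μ, 0 ≤ X j ω ∧ X j ω < 1 := fun j =>
    ae_mem_Ico μ (X j) (hXm j) _ (by positivity) (hsurv j)
  have hae : ∀ᵐ ω ∂μ, ∀ j, 0 ≤ X j ω ∧ X j ω < 1 := ae_all_iff.2 haej
  -- moments
  have hmom : ∀ (j : ℕ) (p : ℝ), 0 ≤ p →
      ∫ ω, |1 - X j ω| ^ p ∂μ = (β * ((j:ℝ) + 1) / 2) / (β * ((j:ℝ) + 1) / 2 + p) :=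
    fun j p hp => moment μ (X j) (hXm j) _ p (by positivity) hp (hsurv j)
  have hjpos : ∀ j : ℕ, (0:ℝ) < (j:ℝ) + 1 := fun j => by positivity
  -- the normalizing constants
  have hc : ∀ j : ℕ, (∫ ω', (1 - X j ω') ^ ((k : ℝ) * β / 2) ∂μ)
      = ((j:ℝ) + 1) / ((j:ℝ) + k + 1) := by
    intro j
    have h1 : (∫ ω', (1 - X j ω') ^ ((k : ℝ) * β / 2) ∂μ) = ∫ ω', |1 - X j ω'| ^ m ∂μ := by
      refine integral_congr_ae ?_
      filter_upwards [haej j] with ω hω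
      rw [hmdef, abs_of_pos (by linarith [hω.2])]
    rw [h1, hmom j m hm, hmdef]
    have hd : β * ((j:ℝ) + 1) / 2 + (k:ℝ) * β / 2 = β * ((j:ℝ) + k + 1) / 2 := by ring
    rw [hd]
    have hne : ((j:ℝ) + k + 1) ≠ 0 := by positivity
    field_simp
  -- second moments
  have hmom2 : ∀ j : ℕ, ∫ ω, |1 - X j ω| ^ (m * γ) ∂μ
      = ((j:ℝ) + 1) / ((j:ℝ) + γ * k + 1) := by
    intro j
    rw [hmom j (m * γ) hmγ, hmdef]
    have hd : β * ((j:ℝ) + 1) / 2 + (k:ℝ) * β / 2 * γ = β * ((j:ℝ) + γ * k + 1) / 2 := by ring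
    rw [hd]
    have hne : ((j:ℝ) + γ * k + 1) ≠ 0 := by positivity
    field_simp
  -- the integrand rewritten as a product of independent nonneg factors
  set g : ℕ → ℝ → ℝ := fun j x =>
    |1 - x| ^ (m * γ) * (((j:ℝ) + k + 1) / ((j:ℝ) + 1)) ^ γ with hgdef
  have hgm : ∀ j, Measurable (g j) := fun j =>
    ((Real.continuous_rpow_const hmγ).measurable.comp
      (measurable_const.sub measurable_id).abs).mul_const _
  have hg0 : ∀ j x, 0 ≤ g j x := fun j x =>
    mul_nonneg (Real.rpow_nonneg (abs_nonneg _) _)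
      (Real.rpow_nonneg (by positivity) _)
  have hinteq : ∫ ω, (∏ j ∈ Finset.range n,
        (1 - X j ω) ^ ((k : ℝ) * β / 2)
          / (∫ ω', (1 - X j ω') ^ ((k : ℝ) * β / 2) ∂μ)) ^ γ ∂μ
      = ∫ ω, ∏ j ∈ Finset.range n, g j (X j ω) ∂μ := by
    refine integral_congr_ae ?_
    filter_upwards [hae] with ω hω
    have hfac : ∀ j ∈ Finset.range n,
        (1 - X j ω) ^ ((k : ℝ) * β / 2) / (∫ ω', (1 - X j ω') ^ ((k : ℝ) * β / 2) ∂μ)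
          = (1 - X j ω) ^ m / (((j:ℝ) + 1) / ((j:ℝ) + k + 1)) := by
      intro j _
      rw [hc j, hmdef]
    rw [Finset.prod_congr rfl hfac,
      ← Real.finset_prod_rpow _ _ (fun j _ => by
        have := (hω j).2
        have h1 : (0:ℝ) < 1 - X j ω := by linarith
        positivity) γ]
    refine Finset.prod_congr rfl fun j _ => ?_
    have h1 : (0:ℝ) < 1 - X j ω := by linarith [(hω j).2]
    have hC : (0:ℝ) < ((j:ℝ) + 1) / ((j:ℝ) + k + 1) := by positivity
    rw [Real.div_rpow (Real.rpow_nonneg h1.le _) hC.le,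
      ← Real.rpow_mul h1.le, div_eq_mul_inv, ← Real.inv_rpow hC.le, inv_div,
      hgdef]
    simp only
    rw [abs_of_pos h1]
  have hprodint := indep_prod_integral μ X hXm hind g hgm hg0 n
  have hfactor : ∀ j : ℕ, ∫ ω, g j (X j ω) ∂μ
      = (((j:ℝ) + k + 1) / ((j:ℝ) + 1)) ^ γ * (((j:ℝ) + 1) / ((j:ℝ) + γ * k + 1)) := by
    intro j
    have : ∫ ω, g j (X j ω) ∂μ
        = (∫ ω, |1 - X j ω| ^ (m * γ) ∂μ) * (((j:ℝ) + k + 1) / ((j:ℝ) + 1)) ^ γ := by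
      rw [hgdef]
      simp only
      exact integral_mul_const _ _
    rw [this, hmom2 j, mul_comm]
  have heq : ∫ ω, (∏ j ∈ Finset.range n,
        (1 - X j ω) ^ ((k : ℝ) * β / 2)
          / (∫ ω', (1 - X j ω') ^ ((k : ℝ) * β / 2) ∂μ)) ^ γ ∂μ
      = ∏ j ∈ Finset.range n,
          (((j : ℝ) + k + 1) / ((j : ℝ) + 1)) ^ γ
            * (((j : ℝ) + 1) / ((j : ℝ) + γ * k + 1)) := by
    rw [hinteq, hprodint]
    exact Finset.prod_congr rfl fun j _ => hfactor j
  exact ⟨heq, heq ▸ prod_bound γ hγ k n⟩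
end

section
/- Let β > 0, β_k = β(k+1)/2, and γ ∈ ℝ with γ > −1 − β/2. Then for all 0 ≤ m < n, ∏_{k=m}^{n-1} Γ(1+β_k)Γ(1+γ+β_k)/Γ(1+γ/2+β_k)² = exp(γ̂² log(n/(m+1)) + O(1/(m+1))) where γ̂² = γ²/(2β) and the implied constant depends only on (γ, β). -/
open Finset Filter Real Topology
set_option maxHeartbeats 1000000

lemma tele_sum (b : ℝ) (hb : 0 < b) (N : ℕ) :
    ∑ j ∈ range N, 1/((b+j)*(b+j+1)) = 1/b - 1/(b+N) := by
  have h : ∀ j ∈ range N, 1/((b+j)*(b+j+1)) = 1/(b+j) - 1/(b+(j+1:ℕ)) := by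
    intro j _
    have h1 : (0:ℝ) < b + j := by positivity
    have h2 : (0:ℝ) < b + j + 1 := by positivity
    have h3 : b + ((j:ℝ) + 1) = b + j + 1 := by ring
    push_cast
    rw [h3, div_sub_div _ _ (ne_of_gt h1) (ne_of_gt h2)]
    congr 1
    ring
  rw [Finset.sum_congr rfl h, Finset.sum_range_sub' (fun j : ℕ => 1/(b+(j:ℝ)))]
  norm_num

lemma log_one_add_le (x : ℝ) (hx : 0 ≤ x) : Real.log (1+x) ≤ x := by
  have := Real.log_le_sub_one_of_pos (x := 1+x) (by linarith)
  linarith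

lemma le_log_one_add (x : ℝ) (hx : 0 ≤ x) : x - x^2 ≤ Real.log (1+x) := by
  have h1 : (0:ℝ) < 1 + x := by linarith
  have h := Real.log_le_sub_one_of_pos (x := (1+x)⁻¹) (by positivity)
  rw [Real.log_inv] at h
  have h3 : (1+x)⁻¹ - 1 = -(x/(1+x)) := by field_simp; ring
  rw [h3] at h
  have h2 : x/(1+x) ≤ Real.log (1+x) := by linarith
  have h4 : x - x^2 ≤ x/(1+x) := by
    rw [le_div_iff₀ h1]; nlinarith [sq_nonneg x]
  linarith

lemma gamma_ratio_lim (a c : ℝ) (ha : 0 < a) (hB : 0 < a + 2*c) (hM : 0 < a + c) :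
    Filter.Tendsto (fun N : ℕ => ∏ j ∈ range (N+1), (a+c+j)^2/((a+j)*(a+2*c+j))) atTop
      (𝓝 (Real.Gamma a * Real.Gamma (a+2*c) / Real.Gamma (a+c)^2)) := by
  have hM' : Real.Gamma (a+c) ≠ 0 := (Real.Gamma_pos_of_pos hM).ne'
  have hg := ((Real.GammaSeq_tendsto_Gamma a).mul
      (Real.GammaSeq_tendsto_Gamma (a+2*c))).div
      ((Real.GammaSeq_tendsto_Gamma (a+c)).pow 2) (pow_ne_zero _ hM')
  refine hg.congr' ?_
  filter_upwards [eventually_ge_atTop 1] with N hN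
  have hN0 : (0:ℝ) < N := by exact_mod_cast hN
  have hfac : (0:ℝ) < (Nat.factorial N : ℝ) := by exact_mod_cast N.factorial_pos
  have hPa : (0:ℝ) < ∏ j ∈ range (N+1), (a+(j:ℝ)) :=
    Finset.prod_pos (fun j _ => by positivity)
  have hPb : (0:ℝ) < ∏ j ∈ range (N+1), (a+2*c+(j:ℝ)) :=
    Finset.prod_pos (fun j _ => by positivity)
  have hPm : (0:ℝ) < ∏ j ∈ range (N+1), (a+c+(j:ℝ)) :=
    Finset.prod_pos (fun j _ => by positivity)
  have hpow : (N:ℝ)^a * (N:ℝ)^(a+2*c) = ((N:ℝ)^(a+c))^2 := by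
    rw [sq, ← Real.rpow_add hN0, ← Real.rpow_add hN0]; ring_nf
  have hprod : ∏ j ∈ range (N+1), (a+c+(j:ℝ))^2/((a+j)*(a+2*c+j))
      = (∏ j ∈ range (N+1), (a+c+(j:ℝ)))^2 /
        ((∏ j ∈ range (N+1), (a+(j:ℝ))) * (∏ j ∈ range (N+1), (a+2*c+(j:ℝ)))) := by
    rw [Finset.prod_div_distrib, Finset.prod_mul_distrib, Finset.prod_pow]
  simp only [Pi.div_apply, Real.GammaSeq]
  rw [hprod]
  have hX : ((N:ℝ) ^ a * (Nat.factorial N:ℝ)) * ((N:ℝ) ^ (a + 2*c) * (Nat.factorial N:ℝ))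
      = (((N:ℝ)^(a+c)) * (Nat.factorial N:ℝ))^2 := by
    rw [mul_pow, ← hpow]; ring
  have hX0 : (((N:ℝ)^(a+c)) * (Nat.factorial N:ℝ)) ≠ 0 :=
    ne_of_gt (mul_pos (Real.rpow_pos_of_pos hN0 _) hfac)
  rw [div_mul_div_comm, hX, div_pow]
  field_simp

lemma gamma_log_est (a c K δ : ℝ) (hK : 1 ≤ K) (hδ : 0 < δ) (hδ1 : δ ≤ 1)
    (hb : 0 < a - 1)
    (hlb_b : ∀ j : ℕ, δ*(K+j) ≤ (a-1)+j)
    (hlb_B : ∀ j : ℕ, δ*(K+j) ≤ a+2*c+j) :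
    |Real.log (Real.Gamma a * Real.Gamma (a+2*c) / Real.Gamma (a+c)^2) - c^2/(a-1)|
      ≤ (2*c^2*|1+2*c|/δ^3 + 2*c^4/δ^4) / K^2 := by
  have hK0 : 0 < K := lt_of_lt_of_le one_pos hK
  have ha : 0 < a := by linarith
  have hB : 0 < a + 2*c := by
    have := hlb_B 0; push_cast at this; nlinarith
  have hM : 0 < a + c := by linarith [ha, hB]
  have hGpos : 0 < Real.Gamma a * Real.Gamma (a+2*c) / Real.Gamma (a+c)^2 := by
    have := Real.Gamma_pos_of_pos ha
    have := Real.Gamma_pos_of_pos hB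
    have := Real.Gamma_pos_of_pos hM
    positivity
  have haj : ∀ j : ℕ, (0:ℝ) < a + j := fun j => by positivity
  have hBj : ∀ j : ℕ, (0:ℝ) < a + 2*c + j := fun j => by
    have := hlb_B j; have := hδ; have : (0:ℝ) < K + j := by positivity
    nlinarith [hlb_B j, mul_pos hδ this]
  have hMj : ∀ j : ℕ, (0:ℝ) < a + c + j := fun j => by
    have := haj j; have := hBj j; nlinarith
  have hbj : ∀ j : ℕ, (0:ℝ) < (a-1) + j := fun j => by positivity
  have hKj : ∀ j : ℕ, (0:ℝ) < K + j := fun j => by positivity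
  have hu0 : ∀ j : ℕ, 0 ≤ c^2/((a+j)*(a+2*c+j)) := fun j => by
    have := haj j; have := hBj j; positivity
  -- pointwise |u - v| bound
  have huv : ∀ j : ℕ, |c^2/((a+j)*(a+2*c+j)) - c^2/(((a-1)+j)*((a-1)+j+1))|
      ≤ (2*c^2*|1+2*c|/(δ^3*K)) * (1/((K+j)*(K+j+1))) := by
    intro j
    have h1 := haj j; have h2 := hBj j; have h3 := hbj j; have h4 := hKj j
    have hj0 : (0:ℝ) ≤ j := Nat.cast_nonneg j
    have heq : c^2/((a+j)*(a+2*c+j)) - c^2/(((a-1)+j)*((a-1)+j+1))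
        = -(c^2*(1+2*c))/((a+j)*(a+2*c+j)*((a-1)+j)) := by
      have h5 : (a-1) + (j:ℝ) + 1 = a + j := by ring
      rw [h5]
      rw [div_sub_div _ _ (mul_pos h1 h2).ne' (mul_pos h3 h1).ne',
        div_eq_div_iff (mul_ne_zero (mul_pos h1 h2).ne' (mul_pos h3 h1).ne')
          (mul_pos (mul_pos h1 h2) h3).ne']
      ring
    rw [heq, abs_div, abs_neg, abs_mul, abs_of_nonneg (sq_nonneg c),
      abs_of_pos (by positivity : (0:ℝ) < (a+j)*(a+2*c+j)*((a-1)+j))]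
    have hcube : δ^3 * (K+j)^3 ≤ (a+j)*(a+2*c+j)*((a-1)+j) := by
      have l1 := hlb_b j
      have l2 := hlb_B j
      have l3 : δ*(K+j) ≤ a + j := by linarith
      have hd : 0 ≤ δ*(K+j) := by positivity
      nlinarith [mul_le_mul l3 l2 hd (le_of_lt h1),
        mul_le_mul_of_nonneg_right l1 (le_of_lt (mul_pos h1 h2))]
    have hw3 : K*((K+j)*(K+j+1)) ≤ 2*(K+j)^3 := by nlinarith [sq_nonneg (K+j), hj0, hK]
    have hrhs : (2*c^2*|1+2*c|/(δ^3*K)) * (1/((K+j)*(K+j+1)))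
        = 2*(c^2*|1+2*c|) / (δ^3*K*((K+j)*(K+j+1))) := by
      field_simp
    rw [hrhs, div_le_div_iff₀ (by positivity) (by positivity)]
    have hq1 : 0 ≤ c^2*|1+2*c| := by positivity
    nlinarith [mul_le_mul_of_nonneg_left hw3 (mul_nonneg hq1 (by positivity : (0:ℝ) ≤ δ^3)),
      mul_le_mul_of_nonneg_left hcube (by positivity : (0:ℝ) ≤ 2*(c^2*|1+2*c|))]
  -- pointwise square bound
  have husq : ∀ j : ℕ, (c^2/((a+j)*(a+2*c+j)))^2
      ≤ (2*c^4/(δ^4*K^2)) * (1/((K+j)*(K+j+1))) := by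
    intro j
    have h1 := haj j; have h2 := hBj j; have h4 := hKj j
    have hj0 : (0:ℝ) ≤ j := Nat.cast_nonneg j
    have l2 := hlb_B j
    have l3 : δ*(K+j) ≤ a + j := by have := hlb_b j; linarith
    have hd : 0 ≤ δ*(K+j) := by positivity
    have hquad : δ^4 * (K+j)^4 ≤ ((a+j)*(a+2*c+j))^2 := by
      have p1 : (δ*(K+j)) * (δ*(K+j)) ≤ (a+j)*(a+2*c+j) := mul_le_mul l3 l2 hd (le_of_lt h1)
      have p2 := mul_le_mul p1 p1 (by positivity) (le_of_lt (mul_pos h1 h2))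
      nlinarith [p2]
    have hw4 : K^2*((K+j)*(K+j+1)) ≤ 2*(K+j)^4 := by
      have p : K^2 ≤ (K+j)^2 := by nlinarith
      have q : K+(j:ℝ)+1 ≤ 2*(K+j) := by linarith
      nlinarith [mul_le_mul_of_nonneg_right
        (mul_le_mul p q (by positivity) (sq_nonneg _)) (le_of_lt h4)]
    have hlhs : (c^2/((a+j)*(a+2*c+j)))^2 = c^4/(((a+j)*(a+2*c+j))^2) := by
      rw [div_pow]; ring_nf
    have hrhs : (2*c^4/(δ^4*K^2)) * (1/((K+j)*(K+j+1)))
        = 2*c^4 / (δ^4*K^2*((K+j)*(K+j+1))) := by field_simp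
    rw [hlhs, hrhs, div_le_div_iff₀ (by positivity) (by positivity)]
    nlinarith [mul_le_mul_of_nonneg_left hw4 (mul_nonneg (by positivity : (0:ℝ) ≤ c^4) (by positivity : (0:ℝ) ≤ δ^4)),
      mul_le_mul_of_nonneg_left hquad (by positivity : (0:ℝ) ≤ 2*c^4)]
  -- summed bounds
  have hsum_g : ∀ N : ℕ, ∑ j ∈ range N, (2*c^2*|1+2*c|/(δ^3*K)) * (1/((K+j)*(K+j+1)))
      ≤ 2*c^2*|1+2*c|/(δ^3*K^2) := by
    intro N
    rw [← Finset.mul_sum, tele_sum K hK0 N]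
    have h0 : (0:ℝ) < K + N := by positivity
    have h1 : 1/K - 1/(K+(N:ℝ)) ≤ 1/K := by
      have : (0:ℝ) ≤ 1/(K+(N:ℝ)) := by positivity
      linarith
    have h2 : (0:ℝ) ≤ 2*c^2*|1+2*c|/(δ^3*K) := by positivity
    calc (2*c^2*|1+2*c|/(δ^3*K)) * (1/K - 1/(K+(N:ℝ)))
        ≤ (2*c^2*|1+2*c|/(δ^3*K)) * (1/K) := mul_le_mul_of_nonneg_left h1 h2
      _ = 2*c^2*|1+2*c|/(δ^3*K^2) := by
          rw [mul_one_div, div_div]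
          congr 1
          ring
  have hsum_sq : ∀ N : ℕ, ∑ j ∈ range N, (c^2/((a+j)*(a+2*c+j)))^2 ≤ 2*c^4/(δ^4*K^2) := by
    intro N
    have h0 : (0:ℝ) < K + N := by positivity
    calc ∑ j ∈ range N, (c^2/((a+j)*(a+2*c+j)))^2
        ≤ ∑ j ∈ range N, (2*c^4/(δ^4*K^2)) * (1/((K+j)*(K+j+1))) :=
          Finset.sum_le_sum (fun j _ => husq j)
      _ = (2*c^4/(δ^4*K^2)) * (1/K - 1/(K+(N:ℝ))) := by rw [← Finset.mul_sum, tele_sum K hK0 N]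
      _ ≤ (2*c^4/(δ^4*K^2)) * 1 := by
          apply mul_le_mul_of_nonneg_left _ (by positivity)
          have : (0:ℝ) ≤ 1/(K+(N:ℝ)) := by positivity
          have hK1 : 1/K ≤ 1 := by
            rw [div_le_one hK0]; exact hK
          linarith
      _ = 2*c^4/(δ^4*K^2) := by ring
  have hsum_v : ∀ N : ℕ, ∑ j ∈ range N, c^2/(((a-1)+j)*((a-1)+j+1))
      = c^2/(a-1) - c^2/((a-1)+N) := by
    intro N
    have : ∀ j ∈ range N, c^2/(((a-1)+j)*((a-1)+j+1)) = c^2 * (1/(((a-1)+j)*((a-1)+j+1))) := by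
      intro j _; rw [mul_one_div]
    rw [Finset.sum_congr rfl this, ← Finset.mul_sum, tele_sum (a-1) hb N, mul_sub,
      mul_one_div, mul_one_div]
  have hS_ub : ∀ N : ℕ, ∑ j ∈ range N, c^2/((a+j)*(a+2*c+j))
      ≤ c^2/(a-1) + 2*c^2*|1+2*c|/(δ^3*K^2) := by
    intro N
    have h1 : ∑ j ∈ range N, c^2/((a+j)*(a+2*c+j))
        ≤ ∑ j ∈ range N, (c^2/(((a-1)+j)*((a-1)+j+1))
            + (2*c^2*|1+2*c|/(δ^3*K)) * (1/((K+j)*(K+j+1)))) := by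
      refine Finset.sum_le_sum (fun j _ => ?_)
      have h := (abs_le.mp (huv j)).2
      linarith
    rw [Finset.sum_add_distrib, hsum_v N] at h1
    have h2 : (0:ℝ) ≤ c^2/((a-1)+(N:ℝ)) := by positivity
    linarith [hsum_g N]
  have hS_lb : ∀ N : ℕ, c^2/(a-1) - c^2/((a-1)+N) - 2*c^2*|1+2*c|/(δ^3*K^2)
      ≤ ∑ j ∈ range N, c^2/((a+j)*(a+2*c+j)) := by
    intro N
    have h1 : ∑ j ∈ range N, (c^2/(((a-1)+j)*((a-1)+j+1))
          - (2*c^2*|1+2*c|/(δ^3*K)) * (1/((K+j)*(K+j+1))))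
        ≤ ∑ j ∈ range N, c^2/((a+j)*(a+2*c+j)) := by
      refine Finset.sum_le_sum (fun j _ => ?_)
      have h := (abs_le.mp (huv j)).1
      linarith
    rw [Finset.sum_sub_distrib, hsum_v N] at h1
    linarith [hsum_g N]
  -- products
  have hfac : ∀ j : ℕ, (a+c+(j:ℝ))^2/((a+j)*(a+2*c+j)) = 1 + c^2/((a+j)*(a+2*c+j)) := by
    intro j
    have h1 := (haj j).ne'
    have h2 := (hBj j).ne'
    rw [one_add_div (mul_ne_zero h1 h2)]
    congr 1
    ring
  have hfacpos : ∀ j : ℕ, (0:ℝ) < 1 + c^2/((a+j)*(a+2*c+j)) := fun j => by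
    have := hu0 j; linarith
  have hPpos : ∀ N : ℕ, 0 < ∏ j ∈ range (N+1), (a+c+(j:ℝ))^2/((a+j)*(a+2*c+j)) :=
    fun N => Finset.prod_pos (fun j _ => by
      have := hMj j; have := haj j; have := hBj j; positivity)
  have hlogP : ∀ N : ℕ, Real.log (∏ j ∈ range (N+1), (a+c+(j:ℝ))^2/((a+j)*(a+2*c+j)))
      = ∑ j ∈ range (N+1), Real.log (1 + c^2/((a+j)*(a+2*c+j))) := by
    intro N
    rw [Finset.prod_congr rfl (fun j _ => hfac j)]
    exact Real.log_prod (fun j _ => ne_of_gt (hfacpos j))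
  have hub : ∀ N : ℕ, (∏ j ∈ range (N+1), (a+c+(j:ℝ))^2/((a+j)*(a+2*c+j)))
      ≤ Real.exp (c^2/(a-1) + 2*c^2*|1+2*c|/(δ^3*K^2)) := by
    intro N
    rw [← Real.exp_log (hPpos N), Real.exp_le_exp, hlogP N]
    calc ∑ j ∈ range (N+1), Real.log (1 + c^2/((a+j)*(a+2*c+j)))
        ≤ ∑ j ∈ range (N+1), c^2/((a+j)*(a+2*c+j)) :=
          Finset.sum_le_sum (fun j _ => log_one_add_le _ (hu0 j))
      _ ≤ _ := hS_ub (N+1)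
  have hlb : ∀ N : ℕ, Real.exp (c^2/(a-1) - c^2/((a-1)+((N:ℝ)+1))
        - 2*c^2*|1+2*c|/(δ^3*K^2) - 2*c^4/(δ^4*K^2))
      ≤ ∏ j ∈ range (N+1), (a+c+(j:ℝ))^2/((a+j)*(a+2*c+j)) := by
    intro N
    rw [← Real.exp_log (hPpos N), Real.exp_le_exp, hlogP N]
    have low : ∑ j ∈ range (N+1), (c^2/((a+j)*(a+2*c+j)) - (c^2/((a+j)*(a+2*c+j)))^2)
        ≤ ∑ j ∈ range (N+1), Real.log (1 + c^2/((a+j)*(a+2*c+j))) :=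
      Finset.sum_le_sum (fun j _ => le_log_one_add _ (hu0 j))
    rw [Finset.sum_sub_distrib] at low
    have h1 := hS_lb (N+1)
    have h2 := hsum_sq (N+1)
    push_cast at h1 h2 ⊢
    linarith
  -- take limits
  have htend := gamma_ratio_lim a c ha hB hM
  have hG_ub : Real.Gamma a * Real.Gamma (a+2*c) / Real.Gamma (a+c)^2
      ≤ Real.exp (c^2/(a-1) + 2*c^2*|1+2*c|/(δ^3*K^2)) :=
    le_of_tendsto htend (Filter.Eventually.of_forall hub)
  have hdentend : Tendsto (fun N : ℕ => (a-1)+((N:ℝ)+1)) atTop atTop :=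
    tendsto_atTop_add_const_left _ (a-1)
      (tendsto_atTop_add_const_right _ 1 tendsto_natCast_atTop_atTop)
  have hzero : Tendsto (fun N : ℕ => c^2/((a-1)+((N:ℝ)+1))) atTop (𝓝 0) :=
    Tendsto.div_atTop tendsto_const_nhds hdentend
  have hexp : Tendsto (fun N : ℕ => Real.exp (c^2/(a-1) - c^2/((a-1)+((N:ℝ)+1))
        - 2*c^2*|1+2*c|/(δ^3*K^2) - 2*c^4/(δ^4*K^2))) atTop
      (𝓝 (Real.exp (c^2/(a-1) - 0 - 2*c^2*|1+2*c|/(δ^3*K^2) - 2*c^4/(δ^4*K^2)))) :=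
    (Real.continuous_exp.tendsto _).comp
      (((tendsto_const_nhds.sub hzero).sub tendsto_const_nhds).sub tendsto_const_nhds)
  have hG_lb : Real.exp (c^2/(a-1) - 0 - 2*c^2*|1+2*c|/(δ^3*K^2) - 2*c^4/(δ^4*K^2))
      ≤ Real.Gamma a * Real.Gamma (a+2*c) / Real.Gamma (a+c)^2 :=
    le_of_tendsto_of_tendsto' hexp htend hlb
  -- conclude
  have hlog_ub : Real.log (Real.Gamma a * Real.Gamma (a+2*c) / Real.Gamma (a+c)^2)
      ≤ c^2/(a-1) + 2*c^2*|1+2*c|/(δ^3*K^2) := by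
    rw [Real.log_le_iff_le_exp hGpos]; exact hG_ub
  have hlog_lb : c^2/(a-1) - 0 - 2*c^2*|1+2*c|/(δ^3*K^2) - 2*c^4/(δ^4*K^2)
      ≤ Real.log (Real.Gamma a * Real.Gamma (a+2*c) / Real.Gamma (a+c)^2) := by
    rw [Real.le_log_iff_exp_le hGpos]; exact hG_lb
  have hsplit : (2*c^2*|1+2*c|/δ^3 + 2*c^4/δ^4)/K^2
      = 2*c^2*|1+2*c|/(δ^3*K^2) + 2*c^4/(δ^4*K^2) := by
    field_simp
  have hV : (0:ℝ) ≤ 2*c^4/(δ^4*K^2) := by positivity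
  rw [hsplit, abs_le]
  exact ⟨by linarith, by linarith⟩

lemma key_est (β γ : ℝ) (hβ : 0 < β) (hγ : -1 - β / 2 < γ) :
    ∃ C : ℝ, 0 < C ∧ ∀ k : ℕ,
      (0 < Real.Gamma (1 + β * ((k:ℝ) + 1) / 2) * Real.Gamma (1 + γ + β * ((k:ℝ) + 1) / 2)
          / Real.Gamma (1 + γ / 2 + β * ((k:ℝ) + 1) / 2) ^ 2) ∧
      |Real.log (Real.Gamma (1 + β * ((k:ℝ) + 1) / 2) * Real.Gamma (1 + γ + β * ((k:ℝ) + 1) / 2)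
          / Real.Gamma (1 + γ / 2 + β * ((k:ℝ) + 1) / 2) ^ 2)
        - (γ^2/(2*β)) * (Real.log ((k:ℝ)+2) - Real.log ((k:ℝ)+1))| ≤ C / ((k:ℝ)+1)^2 := by
  have hγ' : 0 < 1 + γ + β/2 := by linarith
  set δ : ℝ := min 1 (min (β/2) (1 + γ + β/2)) with hδdef
  have hδ : 0 < δ := lt_min one_pos (lt_min (by positivity) hγ')
  have hδ1 : δ ≤ 1 := min_le_left _ _
  have hδβ : δ ≤ β/2 := le_trans (min_le_right _ _) (min_le_left _ _)
  have hδγ : δ ≤ 1 + γ + β/2 := le_trans (min_le_right _ _) (min_le_right _ _)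
  refine ⟨2*(γ/2)^2*|1+2*(γ/2)|/δ^3 + 2*(γ/2)^4/δ^4 + γ^2/(2*β) + 1, by positivity, ?_⟩
  intro k
  have hK : (1:ℝ) ≤ (k:ℝ) + 1 := by
    have : (0:ℝ) ≤ (k:ℝ) := Nat.cast_nonneg k
    linarith
  have hK0 : (0:ℝ) < (k:ℝ) + 1 := by linarith
  -- instantiate gamma_log_est with a = 1 + β(k+1)/2, c = γ/2, K = k+1
  have hb : 0 < (1 + β * ((k:ℝ) + 1) / 2) - 1 := by
    have : 0 < β * ((k:ℝ)+1) / 2 := by positivity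
    linarith
  have hlb_b : ∀ j : ℕ, δ * (((k:ℝ)+1) + j) ≤ ((1 + β * ((k:ℝ) + 1) / 2) - 1) + j := by
    intro j
    have hj : (0:ℝ) ≤ j := Nat.cast_nonneg j
    nlinarith [mul_nonneg (sub_nonneg.mpr hδβ) (le_of_lt hK0),
      mul_nonneg (sub_nonneg.mpr hδ1) hj]
  have hlb_B : ∀ j : ℕ, δ * (((k:ℝ)+1) + j) ≤ (1 + β * ((k:ℝ) + 1) / 2) + 2*(γ/2) + j := by
    intro j
    have hj : (0:ℝ) ≤ j := Nat.cast_nonneg j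
    have hk1 : (0:ℝ) ≤ (k:ℝ) := Nat.cast_nonneg k
    nlinarith [mul_nonneg (sub_nonneg.mpr hδβ) hk1,
      mul_nonneg (sub_nonneg.mpr hδ1) hj]
  have h := gamma_log_est (1 + β * ((k:ℝ) + 1) / 2) (γ/2) ((k:ℝ)+1) δ hK hδ hδ1 hb hlb_b hlb_B
  -- rewrite arguments
  have e2 : 1 + γ + β * ((k:ℝ) + 1) / 2 = (1 + β * ((k:ℝ) + 1) / 2) + 2*(γ/2) := by ring
  have e3 : 1 + γ / 2 + β * ((k:ℝ) + 1) / 2 = (1 + β * ((k:ℝ) + 1) / 2) + γ/2 := by ring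
  rw [e2, e3]
  -- positivity of the Gamma ratio
  have ha : 0 < 1 + β * ((k:ℝ) + 1) / 2 := by linarith
  have hB : 0 < (1 + β * ((k:ℝ) + 1) / 2) + 2*(γ/2) := by
    have := hlb_B 0
    push_cast at this
    nlinarith [mul_pos hδ hK0]
  have hM : 0 < (1 + β * ((k:ℝ) + 1) / 2) + γ/2 := by linarith
  have hGpos : 0 < Real.Gamma (1 + β * ((k:ℝ) + 1) / 2)
      * Real.Gamma ((1 + β * ((k:ℝ) + 1) / 2) + 2*(γ/2))
      / Real.Gamma ((1 + β * ((k:ℝ) + 1) / 2) + γ/2) ^ 2 := by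
    have := Real.Gamma_pos_of_pos ha
    have := Real.Gamma_pos_of_pos hB
    have := Real.Gamma_pos_of_pos hM
    positivity
  refine ⟨hGpos, ?_⟩
  -- middle term rewriting
  have h2 : (γ/2)^2/((1 + β * ((k:ℝ) + 1) / 2) - 1) = (γ^2/(2*β)) * (1/((k:ℝ)+1)) := by
    have hβ' : β ≠ 0 := ne_of_gt hβ
    have hK' : (k:ℝ) + 1 ≠ 0 := ne_of_gt hK0
    field_simp
    ring
  -- log expansion estimate
  have h3 : |(γ^2/(2*β)) * (1/((k:ℝ)+1)) - (γ^2/(2*β)) * (Real.log ((k:ℝ)+2) - Real.log ((k:ℝ)+1))|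
      ≤ (γ^2/(2*β)) * (1/((k:ℝ)+1)^2) := by
    have hlog : Real.log ((k:ℝ)+2) - Real.log ((k:ℝ)+1) = Real.log (1 + 1/((k:ℝ)+1)) := by
      rw [← Real.log_div (by linarith) (ne_of_gt hK0)]
      congr 1
      field_simp
      ring
    rw [hlog, ← mul_sub, abs_mul, abs_of_nonneg (by positivity : (0:ℝ) ≤ γ^2/(2*β))]
    apply mul_le_mul_of_nonneg_left _ (by positivity : (0:ℝ) ≤ γ^2/(2*β))
    have hx : (0:ℝ) ≤ 1/((k:ℝ)+1) := by positivity
    have hup := log_one_add_le (1/((k:ℝ)+1)) hx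
    have hlo := le_log_one_add (1/((k:ℝ)+1)) hx
    have he : (1/((k:ℝ)+1))^2 = 1/((k:ℝ)+1)^2 := by rw [div_pow]; norm_num
    have h0 : (0:ℝ) ≤ 1/((k:ℝ)+1)^2 := by positivity
    rw [abs_le]
    constructor
    · linarith
    · linarith
  -- combine
  rw [h2] at h
  calc |Real.log (Real.Gamma (1 + β * ((k:ℝ) + 1) / 2)
          * Real.Gamma ((1 + β * ((k:ℝ) + 1) / 2) + 2*(γ/2))
          / Real.Gamma ((1 + β * ((k:ℝ) + 1) / 2) + γ/2) ^ 2)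
        - (γ^2/(2*β)) * (Real.log ((k:ℝ)+2) - Real.log ((k:ℝ)+1))|
      ≤ |Real.log (Real.Gamma (1 + β * ((k:ℝ) + 1) / 2)
          * Real.Gamma ((1 + β * ((k:ℝ) + 1) / 2) + 2*(γ/2))
          / Real.Gamma ((1 + β * ((k:ℝ) + 1) / 2) + γ/2) ^ 2)
        - (γ^2/(2*β)) * (1/((k:ℝ)+1))|
        + |(γ^2/(2*β)) * (1/((k:ℝ)+1))
          - (γ^2/(2*β)) * (Real.log ((k:ℝ)+2) - Real.log ((k:ℝ)+1))| := abs_sub_le _ _ _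
    _ ≤ (2*(γ/2)^2*|1+2*(γ/2)|/δ^3 + 2*(γ/2)^4/δ^4) / ((k:ℝ)+1)^2
        + (γ^2/(2*β)) * (1/((k:ℝ)+1)^2) := add_le_add h h3
    _ ≤ (2*(γ/2)^2*|1+2*(γ/2)|/δ^3 + 2*(γ/2)^4/δ^4 + γ^2/(2*β) + 1) / ((k:ℝ)+1)^2 := by
        rw [mul_one_div, ← add_div]
        rw [div_le_div_iff_of_pos_right (by positivity : (0:ℝ) < ((k:ℝ)+1)^2)]
        linarith

/-- Let `β > 0`, `β_k = β(k+1)/2`, and `γ ∈ ℝ` with `γ > −1 − β/2`. Then for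
all `0 ≤ m < n`,
`∏_{k=m}^{n-1} Γ(1+β_k)Γ(1+γ+β_k)/Γ(1+γ/2+β_k)²
  = exp(γ̂² log(n/(m+1)) + O(1/(m+1)))`
where `γ̂² = γ²/(2β)` and the implied constant depends only on `(γ, β)`. -/
theorem stmt19 (β γ : ℝ) (hβ : 0 < β) (hγ : -1 - β / 2 < γ) :
    ∃ Cc : ℝ, 0 < Cc ∧ ∀ m n : ℕ, m < n →
      ∃ err : ℝ, |err| ≤ Cc / ((m : ℝ) + 1) ∧
        (∏ k ∈ Finset.Ico m n,
            Real.Gamma (1 + β * (k + 1) / 2)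
              * Real.Gamma (1 + γ + β * (k + 1) / 2)
              / Real.Gamma (1 + γ / 2 + β * (k + 1) / 2) ^ 2)
          = Real.exp ((γ ^ 2 / (2 * β)) * Real.log ((n : ℝ) / ((m : ℝ) + 1))
              + err) := by
  obtain ⟨C, hC, hkey⟩ := key_est β γ hβ hγ
  refine ⟨2*C + γ^2/(2*β) + 1, by positivity, ?_⟩
  intro m n hmn
  have hm0 : (0:ℝ) < (m:ℝ) + 1 := by positivity
  have hn0 : (0:ℝ) < (n:ℝ) := by
    have : 0 < n := lt_of_le_of_lt (Nat.zero_le m) hmn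
    exact_mod_cast this
  have hnm : (m:ℝ) + 1 ≤ (n:ℝ) := by exact_mod_cast Nat.succ_le_of_lt hmn
  have hA0 : (0:ℝ) ≤ γ^2/(2*β) := by positivity
  have hprod : (∏ k ∈ Finset.Ico m n,
      Real.Gamma (1 + β * ((k:ℝ) + 1) / 2) * Real.Gamma (1 + γ + β * ((k:ℝ) + 1) / 2)
        / Real.Gamma (1 + γ / 2 + β * ((k:ℝ) + 1) / 2) ^ 2)
      = Real.exp (∑ k ∈ Finset.Ico m n, Real.log (Real.Gamma (1 + β * ((k:ℝ) + 1) / 2)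
          * Real.Gamma (1 + γ + β * ((k:ℝ) + 1) / 2)
          / Real.Gamma (1 + γ / 2 + β * ((k:ℝ) + 1) / 2) ^ 2)) := by
    rw [Real.exp_sum]
    exact Finset.prod_congr rfl (fun k _ => (Real.exp_log (hkey k).1).symm)
  refine ⟨(∑ k ∈ Finset.Ico m n, Real.log (Real.Gamma (1 + β * ((k:ℝ) + 1) / 2)
          * Real.Gamma (1 + γ + β * ((k:ℝ) + 1) / 2)
          / Real.Gamma (1 + γ / 2 + β * ((k:ℝ) + 1) / 2) ^ 2))
      - (γ^2/(2*β)) * Real.log ((n:ℝ)/((m:ℝ)+1)), ?_, ?_⟩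
  swap
  · rw [hprod]
    congr 1
    ring
  -- the error bound
  -- telescoping of logs
  have htele : ∑ k ∈ Finset.Ico m n, (Real.log ((k:ℝ)+2) - Real.log ((k:ℝ)+1))
      = Real.log ((n:ℝ)+1) - Real.log ((m:ℝ)+1) := by
    have hcongr : ∀ k ∈ Finset.Ico m n, Real.log ((k:ℝ)+2) - Real.log ((k:ℝ)+1)
        = (fun j : ℕ => Real.log ((j:ℝ)+1)) (k+1) - (fun j : ℕ => Real.log ((j:ℝ)+1)) k := by
      intro k _
      simp only
      push_cast
      ring_nf
    rw [Finset.sum_congr rfl hcongr, Finset.sum_Ico_eq_sub _ (le_of_lt hmn),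
      Finset.sum_range_sub (fun j : ℕ => Real.log ((j:ℝ)+1)),
      Finset.sum_range_sub (fun j : ℕ => Real.log ((j:ℝ)+1))]
    simp
  -- bound on the sum of deviations
  have hdev : |∑ k ∈ Finset.Ico m n, (Real.log (Real.Gamma (1 + β * ((k:ℝ) + 1) / 2)
          * Real.Gamma (1 + γ + β * ((k:ℝ) + 1) / 2)
          / Real.Gamma (1 + γ / 2 + β * ((k:ℝ) + 1) / 2) ^ 2)
        - (γ^2/(2*β)) * (Real.log ((k:ℝ)+2) - Real.log ((k:ℝ)+1)))|
      ≤ 2*C/((m:ℝ)+1) := by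
    calc |∑ k ∈ Finset.Ico m n, (Real.log (Real.Gamma (1 + β * ((k:ℝ) + 1) / 2)
          * Real.Gamma (1 + γ + β * ((k:ℝ) + 1) / 2)
          / Real.Gamma (1 + γ / 2 + β * ((k:ℝ) + 1) / 2) ^ 2)
        - (γ^2/(2*β)) * (Real.log ((k:ℝ)+2) - Real.log ((k:ℝ)+1)))|
        ≤ ∑ k ∈ Finset.Ico m n, |Real.log (Real.Gamma (1 + β * ((k:ℝ) + 1) / 2)
          * Real.Gamma (1 + γ + β * ((k:ℝ) + 1) / 2)
          / Real.Gamma (1 + γ / 2 + β * ((k:ℝ) + 1) / 2) ^ 2)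
        - (γ^2/(2*β)) * (Real.log ((k:ℝ)+2) - Real.log ((k:ℝ)+1))| :=
          Finset.abs_sum_le_sum_abs _ _
      _ ≤ ∑ k ∈ Finset.Ico m n, 2*C*(1/((k:ℝ)+1) - 1/((k:ℝ)+2)) := by
          refine Finset.sum_le_sum (fun k _ => le_trans ((hkey k).2) ?_)
          have hk1 : (0:ℝ) < (k:ℝ)+1 := by positivity
          have hk2 : (0:ℝ) < (k:ℝ)+2 := by positivity
          have he : 1/((k:ℝ)+1) - 1/((k:ℝ)+2) = 1/(((k:ℝ)+1)*((k:ℝ)+2)) := by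
            rw [div_sub_div _ _ (ne_of_gt hk1) (ne_of_gt hk2)]
            congr 1
            ring
          rw [he, mul_one_div, div_le_div_iff₀ (by positivity) (by positivity)]
          have hkk : ((k:ℝ)+2) ≤ 2*((k:ℝ)+1) := by
            have : (0:ℝ) ≤ (k:ℝ) := Nat.cast_nonneg k
            linarith
          nlinarith [mul_le_mul_of_nonneg_left hkk (mul_nonneg (le_of_lt hC) (le_of_lt hk1))]
      _ = 2*C*(∑ k ∈ Finset.Ico m n, (1/((k:ℝ)+1) - 1/((k:ℝ)+2))) := by
          rw [Finset.mul_sum]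
      _ ≤ 2*C/((m:ℝ)+1) := by
          have htel2 : ∑ k ∈ Finset.Ico m n, (1/((k:ℝ)+1) - 1/((k:ℝ)+2))
              = 1/((m:ℝ)+1) - 1/((n:ℝ)+1) := by
            have hcongr : ∀ k ∈ Finset.Ico m n, 1/((k:ℝ)+1) - 1/((k:ℝ)+2)
                = (fun j : ℕ => 1/((j:ℝ)+1)) k - (fun j : ℕ => 1/((j:ℝ)+1)) (k+1) := by
              intro k _
              simp only
              push_cast
              ring_nf
            rw [Finset.sum_congr rfl hcongr, Finset.sum_Ico_eq_sub _ (le_of_lt hmn),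
              Finset.sum_range_sub' (fun j : ℕ => 1/((j:ℝ)+1)),
              Finset.sum_range_sub' (fun j : ℕ => 1/((j:ℝ)+1))]
            ring
          rw [htel2]
          have : (0:ℝ) ≤ 1/((n:ℝ)+1) := by positivity
          have h2C : (0:ℝ) ≤ 2*C := by linarith
          calc 2*C*(1/((m:ℝ)+1) - 1/((n:ℝ)+1)) ≤ 2*C*(1/((m:ℝ)+1)) :=
                mul_le_mul_of_nonneg_left (by linarith) h2C
            _ = 2*C/((m:ℝ)+1) := by rw [mul_one_div]
  -- log(n/(m+1)) and log(n+1)-log(m+1)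
  have hlogdiv : Real.log ((n:ℝ)/((m:ℝ)+1)) = Real.log (n:ℝ) - Real.log ((m:ℝ)+1) :=
    Real.log_div (ne_of_gt hn0) (ne_of_gt hm0)
  have hlogn : 0 ≤ Real.log ((n:ℝ)+1) - Real.log (n:ℝ) ∧
      Real.log ((n:ℝ)+1) - Real.log (n:ℝ) ≤ 1/((m:ℝ)+1) := by
    have he : Real.log ((n:ℝ)+1) - Real.log (n:ℝ) = Real.log (1 + 1/(n:ℝ)) := by
      rw [← Real.log_div (by linarith) (ne_of_gt hn0)]
      congr 1
      field_simp
    constructor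
    · rw [he]
      apply Real.log_nonneg
      have : (0:ℝ) ≤ 1/(n:ℝ) := by positivity
      linarith
    · rw [he]
      have h1 := log_one_add_le (1/(n:ℝ)) (by positivity)
      have h2 : 1/(n:ℝ) ≤ 1/((m:ℝ)+1) := one_div_le_one_div_of_le hm0 hnm
      linarith
  -- put everything together
  have hsplit : ∑ k ∈ Finset.Ico m n, Real.log (Real.Gamma (1 + β * ((k:ℝ) + 1) / 2)
          * Real.Gamma (1 + γ + β * ((k:ℝ) + 1) / 2)
          / Real.Gamma (1 + γ / 2 + β * ((k:ℝ) + 1) / 2) ^ 2)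
      = (∑ k ∈ Finset.Ico m n, (Real.log (Real.Gamma (1 + β * ((k:ℝ) + 1) / 2)
          * Real.Gamma (1 + γ + β * ((k:ℝ) + 1) / 2)
          / Real.Gamma (1 + γ / 2 + β * ((k:ℝ) + 1) / 2) ^ 2)
        - (γ^2/(2*β)) * (Real.log ((k:ℝ)+2) - Real.log ((k:ℝ)+1))))
        + (γ^2/(2*β)) * (Real.log ((n:ℝ)+1) - Real.log ((m:ℝ)+1)) := by
    rw [Finset.sum_sub_distrib, ← Finset.mul_sum, htele]
    ring
  rw [hsplit, hlogdiv]
  have habs2 : |(γ^2/(2*β)) * (Real.log ((n:ℝ)+1) - Real.log ((m:ℝ)+1))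
      - (γ^2/(2*β)) * (Real.log (n:ℝ) - Real.log ((m:ℝ)+1))|
      ≤ (γ^2/(2*β)) * (1/((m:ℝ)+1)) := by
    have he : (γ^2/(2*β)) * (Real.log ((n:ℝ)+1) - Real.log ((m:ℝ)+1))
        - (γ^2/(2*β)) * (Real.log (n:ℝ) - Real.log ((m:ℝ)+1))
        = (γ^2/(2*β)) * (Real.log ((n:ℝ)+1) - Real.log (n:ℝ)) := by ring
    rw [he, abs_mul, abs_of_nonneg hA0, abs_of_nonneg hlogn.1]
    exact mul_le_mul_of_nonneg_left hlogn.2 hA0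
  calc |(∑ k ∈ Finset.Ico m n, (Real.log (Real.Gamma (1 + β * ((k:ℝ) + 1) / 2)
          * Real.Gamma (1 + γ + β * ((k:ℝ) + 1) / 2)
          / Real.Gamma (1 + γ / 2 + β * ((k:ℝ) + 1) / 2) ^ 2)
        - (γ^2/(2*β)) * (Real.log ((k:ℝ)+2) - Real.log ((k:ℝ)+1))))
        + (γ^2/(2*β)) * (Real.log ((n:ℝ)+1) - Real.log ((m:ℝ)+1))
        - (γ^2/(2*β)) * (Real.log (n:ℝ) - Real.log ((m:ℝ)+1))|
      ≤ |∑ k ∈ Finset.Ico m n, (Real.log (Real.Gamma (1 + β * ((k:ℝ) + 1) / 2)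
          * Real.Gamma (1 + γ + β * ((k:ℝ) + 1) / 2)
          / Real.Gamma (1 + γ / 2 + β * ((k:ℝ) + 1) / 2) ^ 2)
        - (γ^2/(2*β)) * (Real.log ((k:ℝ)+2) - Real.log ((k:ℝ)+1)))|
        + |(γ^2/(2*β)) * (Real.log ((n:ℝ)+1) - Real.log ((m:ℝ)+1))
          - (γ^2/(2*β)) * (Real.log (n:ℝ) - Real.log ((m:ℝ)+1))| := by
        rw [add_sub_assoc]
        exact abs_add_le _ _
    _ ≤ 2*C/((m:ℝ)+1) + (γ^2/(2*β)) * (1/((m:ℝ)+1)) := add_le_add hdev habs2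
    _ ≤ (2*C + γ^2/(2*β) + 1)/((m:ℝ)+1) := by
        rw [mul_one_div, ← add_div]
        rw [div_le_div_iff_of_pos_right hm0]
        linarith
end
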